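/- arXiv:1109.2976 — 5 statements merged into one kernel-verified Lean document; each statement's English description precedes it below -/
import Mathlib

section
/- Let G be a finite simple 2-connected graph and let L be a list assignment giving each vertex v of G a finite list L(v) of colors with |L(v)| ≥ deg(v). Then G admits a proper coloring φ with φ(v) ∈ L(v) for every vertex v, unless G is a complete graph or an odd cycle and the lists assigned to all vertices are the same. -/
/-!
A vertex with more colours than neighbours can be coloured last; hence a graph with
`|L v| ≥ deg v` is `L`-colourable as soon as every vertex reaches such a vertex, and every case
reduces to this after precolouring a few vertices. If adjacent `u, v` have a colour
`c ∈ L u \ L v`, colour `u` with `c`: in the connected graph `G - u`, `v` has slack. Otherwise all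
lists equal some `L₀` and `G` is regular. In degree two, `G` is an even cycle and is 2-coloured.
In degree at least three, if `G` is not complete, there are non-adjacent `b, c` with a common
neighbour `a` such that `G - {b, c}` is connected; giving `b` and `c` the same colour leaves a
spare colour at `a`.
-/

open SimpleGraph

/-- A graph is 2-connected if it has at least three vertices and deleting any single vertex
leaves it connected. -/
def TwoConnected {V : Type*} [Fintype V] (G : SimpleGraph V) : Prop :=
  3 ≤ Fintype.card V ∧ ∀ v : V, (G.induce ({v}ᶜ : Set V)).Connected

/-- A graph is an odd cycle if it is connected, every vertex has degree two, and the number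
of vertices is odd. -/
def IsOddCycleGraph {V : Type*} [Fintype V] (G : SimpleGraph V) [DecidableRel G.Adj] : Prop :=
  G.Connected ∧ (∀ v : V, G.degree v = 2) ∧ Odd (Fintype.card V)

open Finset

namespace SimpleGraph

variable {V W α β : Type*} {G : SimpleGraph V} {H : SimpleGraph W} {b c y : V}

def ReachableWithin (G : SimpleGraph V) (U : Set V) (u v : V) : Prop :=
  ∃ p : G.Walk u v, ∀ x ∈ p.support, x ∈ U

def PreconnectedOn (G : SimpleGraph V) (U : Set V) : Prop :=
  ∀ x ∈ U, ∀ y ∈ U, G.ReachableWithin U x y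

namespace ReachableWithin

variable {U U' : Set V} {u v w : V}

lemma refl (hu : u ∈ U) : G.ReachableWithin U u u := ⟨.nil, by simpa using hu⟩

lemma symm (h : G.ReachableWithin U u v) : G.ReachableWithin U v u := by
  obtain ⟨p, hp⟩ := h
  exact ⟨p.reverse, by simpa using hp⟩

lemma trans (h : G.ReachableWithin U u v) (h' : G.ReachableWithin U v w) :
    G.ReachableWithin U u w := by
  obtain ⟨p, hp⟩ := h
  obtain ⟨q, hq⟩ := h'
  exact ⟨p.append q, fun x hx => (Walk.mem_support_append_iff p q).mp hx |>.elim (hp x) (hq x)⟩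

lemma of_adj (h : G.Adj u v) (hu : u ∈ U) (hv : v ∈ U) : G.ReachableWithin U u v :=
  ⟨h.toWalk, by simp [hu, hv]⟩

lemma mono (hUU' : U ⊆ U') (h : G.ReachableWithin U u v) : G.ReachableWithin U' u v := by
  obtain ⟨p, hp⟩ := h
  exact ⟨p, fun x hx => hUU' (hp x hx)⟩

lemma right_mem (h : G.ReachableWithin U u v) : v ∈ U := by
  obtain ⟨p, hp⟩ := h
  exact hp v p.end_mem_support

lemma of_mem_support (p : G.Walk u v) (hp : ∀ x ∈ p.support, x ∈ U) (hw : w ∈ p.support) :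
    G.ReachableWithin U u w := by
  classical
  exact ⟨p.takeUntil w hw, fun x hx => hp x (p.support_takeUntil_subset_support hw hx)⟩

end ReachableWithin

lemma Walk.exists_reachableWithin_sdiff {A S U : Set V}
    (hA : ∀ p ∈ A, ∀ q, G.Adj p q → q ∈ A ∨ q ∈ S) {x y : V} (w : G.Walk x y)
    (hw : ∀ z ∈ w.support, z ∈ U) (hx : x ∉ A) (hy : y ∈ S) :
    ∃ s ∈ S, G.ReachableWithin (U \ A) x s := by
  induction w with
  | nil => exact ⟨_, hy, .refl ⟨hw _ (by simp), hx⟩⟩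
  | @cons x x' y h w ih =>
    by_cases hxS : x ∈ S
    · exact ⟨x, hxS, .refl ⟨hw x (by simp), hx⟩⟩
    have hx' : x' ∉ A := fun hx'A => ((hA x' hx'A x h.symm).resolve_left hx) |> hxS
    obtain ⟨s, hs, hreach⟩ := ih (fun z hz => hw z (by simp [hz])) hx' hy
    exact ⟨s, hs, (ReachableWithin.of_adj (U := U \ A) h ⟨hw x (by simp), hx⟩
      ⟨hw x' (by simp), hx'⟩).trans hreach⟩

lemma ReachableWithin.of_induce {U : Set V} {x y : U} (h : (G.induce U).Reachable x y) :
    G.ReachableWithin U x y := by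
  obtain ⟨p⟩ := h
  refine ⟨p.map (Embedding.induce U).toHom, fun z hz => ?_⟩
  obtain ⟨z, -, rfl⟩ := List.mem_map.mp (Walk.support_map _ p ▸ hz)
  exact z.2

lemma ReachableWithin.erase_or_exists_adj {U : Set V} {x y v : V}
    (h : G.ReachableWithin U x y) (hx : x ≠ v) :
    G.ReachableWithin (U \ {v}) x y ∨ ∃ z, G.Adj z v ∧ G.ReachableWithin (U \ {v}) x z := by
  obtain ⟨p, hp⟩ := h
  obtain ⟨s, hs | hs, hreach⟩ := p.exists_reachableWithin_sdiff (A := {v})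
    (S := insert y {z | G.Adj z v}) (by rintro _ rfl q hq; exact .inr (.inr hq.symm)) hp hx
    (Set.mem_insert y _)
  · exact .inl (hs ▸ hreach)
  · exact .inr ⟨s, hs, hreach⟩

section Finite

variable [Fintype V] [DecidableEq V] [DecidableRel G.Adj]

theorem exists_listColoring_on_of_slack [DecidableEq α] [Nonempty α] (L : V → Finset α)
    (U : Finset V) (hdeg : ∀ x ∈ U, #(G.neighborFinset x ∩ U) ≤ #(L x))
    (hslack : ∀ x ∈ U, ∃ y, G.ReachableWithin U x y ∧ #(G.neighborFinset y ∩ U) < #(L y)) :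
    ∃ φ : V → α, (∀ x ∈ U, φ x ∈ L x) ∧ ∀ x ∈ U, ∀ y ∈ U, G.Adj x y → φ x ≠ φ y := by
  induction U using Finset.strongInduction with
  | H U ih =>
  rcases U.eq_empty_or_nonempty with rfl | ⟨x₀, hx₀⟩
  · exact ⟨fun _ => Classical.arbitrary α, by simp, by simp⟩
  obtain ⟨v, hreach, hv⟩ := hslack x₀ hx₀
  have hvU : v ∈ U := hreach.right_mem
  have hdeg' : ∀ x ∈ U.erase v, #(G.neighborFinset x ∩ U.erase v) ≤ #(L x) := fun x hx =>
    (card_le_card (by gcongr; exact U.erase_subset v)).trans (hdeg x (U.mem_of_mem_erase hx))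
  have hslack' : ∀ x ∈ U.erase v, ∃ y, G.ReachableWithin ↑(U.erase v) x y ∧
      #(G.neighborFinset y ∩ U.erase v) < #(L y) := by
    intro x hx
    obtain ⟨y, hxy, hy⟩ := hslack x (U.mem_of_mem_erase hx)
    rw [coe_erase]
    rcases hxy.erase_or_exists_adj (ne_of_mem_erase hx) with hxy' | ⟨z, hzv, hxz⟩
    · refine ⟨y, hxy', lt_of_le_of_lt (card_le_card ?_) hy⟩
      gcongr; exact U.erase_subset v
    · -- `z` lost its neighbour `v` but kept all its colours
      refine ⟨z, hxz, ?_⟩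
      rw [inter_erase]
      exact (card_erase_lt_of_mem (by simp [hzv, hvU])).trans_le
        (hdeg z (by simpa using hxz.right_mem.1))
  obtain ⟨φ, hφL, hφ⟩ := ih _ (erase_ssubset hvU) hdeg' hslack'
  obtain ⟨γ, hγL, hγ⟩ := exists_mem_notMem_of_card_lt_card
    (s := (G.neighborFinset v ∩ U).image φ) (card_image_le.trans_lt hv)
  have hγ' : ∀ y ∈ U, G.Adj v y → φ y ≠ γ := fun y hy hvy h =>
    hγ (mem_image.mpr ⟨y, by simp [hvy, hy], h⟩)
  refine ⟨Function.update φ v γ, fun x hx => ?_, fun x hx y hy hxy => ?_⟩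
  · rcases eq_or_ne x v with rfl | hxv
    · simpa using hγL
    · simpa [hxv] using hφL x (mem_erase.mpr ⟨hxv, hx⟩)
  · rcases eq_or_ne x v with rfl | hxv
    · simpa [hxy.ne.symm] using (hγ' y hy hxy).symm
    rcases eq_or_ne y v with rfl | hyv
    · simpa [hxv] using hγ' x hx hxy.symm
    · simpa [hxv, hyv] using hφ x (by simp [hxv, hx]) y (by simp [hyv, hy]) hxy

theorem exists_listColoring_of_precoloring [DecidableEq α] (L : V → Finset α)
    (hL : ∀ v, G.degree v ≤ #(L v)) (S : Finset V) (ψ : V → α) (hψL : ∀ x ∈ S, ψ x ∈ L x)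
    (hψ : ∀ x ∈ S, ∀ y ∈ S, G.Adj x y → ψ x ≠ ψ y)
    (hslack : ∀ x ∉ S, ∃ y, G.ReachableWithin (↑S)ᶜ x y ∧
      #(L y ∩ (G.neighborFinset y ∩ S).image ψ) < #(G.neighborFinset y ∩ S)) :
    ∃ φ : V → α, (∀ v, φ v ∈ L v) ∧ ∀ ⦃u v : V⦄, G.Adj u v → φ u ≠ φ v := by
  rcases isEmpty_or_nonempty V with _ | ⟨⟨v₀⟩⟩
  · exact ⟨isEmptyElim, isEmptyElim, fun u => isEmptyElim u⟩
  have : Nonempty α := ⟨ψ v₀⟩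
  set L' : V → Finset α := fun x => L x \ (G.neighborFinset x ∩ S).image ψ
  have hcount : ∀ x, #(G.neighborFinset x ∩ Sᶜ) + #(G.neighborFinset x ∩ S) ≤
      #(L' x) + #(L x ∩ (G.neighborFinset x ∩ S).image ψ) := fun x => by
    rw [← sdiff_eq_inter_compl, card_sdiff_add_card_inter, card_sdiff_add_card_inter,
      card_neighborFinset_eq_degree]
    exact hL x
  have hblock : ∀ x, #(L x ∩ (G.neighborFinset x ∩ S).image ψ) ≤ #(G.neighborFinset x ∩ S) :=
    fun x => (card_le_card inter_subset_right).trans card_image_le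
  obtain ⟨φ, hφL, hφ⟩ := exists_listColoring_on_of_slack (G := G) L' Sᶜ
    (fun x _ => by have := hcount x; have := hblock x; omega)
    (fun x hx => by
      obtain ⟨y, hxy, hy⟩ := hslack x (mem_compl.mp hx)
      exact ⟨y, by rwa [coe_compl], by have := hcount y; omega⟩)
  have hφψ : ∀ x ∈ S, ∀ y ∉ S, G.Adj x y → ψ x ≠ φ y := fun x hx y hy hxy h =>
    (mem_sdiff.mp (hφL y (mem_compl.mpr hy))).2
      (mem_image.mpr ⟨x, by simp [hxy.symm, hx], h⟩)
  refine ⟨fun x => if x ∈ S then ψ x else φ x, fun x => ?_, fun x y hxy => ?_⟩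
  · by_cases hx : x ∈ S
    · simpa [hx] using hψL x hx
    · simpa [hx] using (mem_sdiff.mp (hφL x (mem_compl.mpr hx))).1
  · by_cases hx : x ∈ S <;> by_cases hy : y ∈ S <;> simp only [hx, hy, if_true, if_false]
    · exact hψ x hx y hy hxy
    · exact hφψ x hx y hy hxy
    · exact (hφψ y hy x hx hxy.symm).symm
    · exact hφ x (mem_compl.mpr hx) y (mem_compl.mpr hy) hxy

theorem Connected.exists_listColoring_of_degree_lt [DecidableEq α] (hG : G.Connected)
    (L : V → Finset α) (hL : ∀ v, G.degree v ≤ #(L v)) {v₀ : V} (hv₀ : G.degree v₀ < #(L v₀)) :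
    ∃ φ : V → α, (∀ v, φ v ∈ L v) ∧ ∀ ⦃u v : V⦄, G.Adj u v → φ u ≠ φ v := by
  obtain ⟨γ, -⟩ := card_pos.mp (Nat.zero_lt_of_lt hv₀)
  have : Nonempty α := ⟨γ⟩
  obtain ⟨φ, hφL, hφ⟩ := exists_listColoring_on_of_slack (G := G) L univ
    (fun x _ => by simpa using hL x)
    (fun x _ => ⟨v₀, (hG.preconnected x v₀).elim fun p => ⟨p, by simp⟩, by simpa using hv₀⟩)
  exact ⟨φ, fun v => hφL v (mem_univ v), fun u v h => hφ u (mem_univ u) v (mem_univ v) h⟩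

end Finite

def AtDistTwo (G : SimpleGraph V) (b c : V) : Prop :=
  b ≠ c ∧ ¬G.Adj b c ∧ ∃ a, G.Adj a b ∧ G.Adj a c

lemma Connected.exists_atDistTwo (hG : G.Connected) (hG' : G ≠ ⊤) : ∃ b c, G.AtDistTwo b c := by
  obtain ⟨p, q, hpq, hnadj⟩ : ∃ p q, p ≠ q ∧ ¬G.Adj p q := by
    by_contra! h
    exact hG' (eq_top_iff.mpr fun x y hxy => h x y hxy)
  suffices ∀ {p q : V} (w : G.Walk p q), p ≠ q → ¬G.Adj p q → ∃ b c, G.AtDistTwo b c from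
    (hG.preconnected p q).elim fun w => this w hpq hnadj
  intro p q w
  induction w with
  | nil => exact fun h => absurd rfl h
  | @cons a t e h w ih =>
    intro hae hnadj
    by_cases hte : t = e
    · exact absurd (hte ▸ h) hnadj
    by_cases hadj : G.Adj t e
    · exact ⟨a, e, hae, hnadj, t, h.symm, hadj⟩
    · exact ih hte hadj

def componentWithin (G : SimpleGraph V) (U : Set V) (y : V) : Set V :=
  {x | G.ReachableWithin U y x}

lemma componentWithin_subset {U : Set V} : G.componentWithin U y ⊆ U :=
  fun _ h => ReachableWithin.right_mem h

lemma mem_componentWithin_self {U : Set V} (hy : y ∈ U) : y ∈ G.componentWithin U y :=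
  ReachableWithin.refl hy

lemma adj_mem_componentWithin_or {U : Set V} {p : V} (hp : p ∈ G.componentWithin U y) (q : V)
    (hpq : G.Adj p q) : q ∈ G.componentWithin U y ∨ q ∈ Uᶜ := by
  by_cases hq : q ∈ U
  · exact .inl (ReachableWithin.trans hp (.of_adj hpq (componentWithin_subset hp) hq))
  · exact .inr hq

lemma exists_adj_mem_componentWithin [G.LocallyFinite] (hy3 : 3 ≤ G.degree y)
    (hy : y ∉ ({b, c} : Set V)) : ∃ z, G.Adj y z ∧ z ∈ G.componentWithin {b, c}ᶜ y := by
  classical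
  obtain ⟨z, hz, hzbc⟩ := exists_mem_notMem_of_card_lt_card (s := {b, c})
    (t := G.neighborFinset y) (card_le_two.trans_lt (by rwa [card_neighborFinset_eq_degree]))
  have hyz := (mem_neighborFinset _ _ _).mp hz
  exact ⟨z, hyz, (adj_mem_componentWithin_or (mem_componentWithin_self hy) z hyz).resolve_right
    (by simpa using hzbc)⟩

lemma Reachable.eq_of_forall_adj {f : V → β} (hf : ∀ ⦃u v⦄, G.Adj u v → f u = f v) {u v : V}
    (h : G.Reachable u v) : f u = f v := by
  obtain ⟨p⟩ := h
  induction p with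
  | nil => rfl
  | cons h _ ih => exact (hf h).trans ih

lemma Hom.adj_of_injective_of_degree_le [H.LocallyFinite] [G.LocallyFinite] (f : H →g G)
    (hf : Function.Injective f) {i j : W} (hdeg : G.degree (f i) ≤ H.degree i)
    (h : G.Adj (f i) (f j)) : H.Adj i j := by
  classical
  have hsub : (H.neighborFinset i).map ⟨f, hf⟩ ⊆ G.neighborFinset (f i) := by
    intro x hx
    obtain ⟨j, hj, rfl⟩ := mem_map.mp hx
    exact (mem_neighborFinset _ _ _).mpr (f.map_adj ((mem_neighborFinset _ _ _).mp hj))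
  have heq := eq_of_subset_of_card_le hsub (by simpa using hdeg)
  obtain ⟨j', hj', hfj⟩ := mem_map.mp (heq ▸ (mem_neighborFinset _ _ _).mpr h)
  obtain rfl : j' = j := hf hfj
  simpa using hj'

lemma cycleGraph_degree_eq_two {n : ℕ} (hn : 3 ≤ n) (v : Fin n) :
    (cycleGraph n).degree v = 2 := by
  obtain ⟨m, rfl⟩ : ∃ m, n = m + 3 := ⟨n - 3, by omega⟩
  exact cycleGraph_degree_three_le

/-- A connected 2-regular graph is a Hamiltonian cycle, hence a copy of `cycleGraph (card V)`. -/
theorem Connected.nonempty_coloring_bool_of_degree_eq_two [Fintype V] [DecidableRel G.Adj]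
    (hG : G.Connected) (h2 : ∀ v, G.degree v = 2) (heven : Even (Fintype.card V)) :
    Nonempty (G.Coloring Bool) := by
  classical
  have hcyc : G.IsCycles := fun v _ => (Set.ncard_eq_toFinset_card' _).trans (h2 v)
  obtain ⟨v⟩ := hG.nonempty
  have hv : (G.neighborSet v).Nonempty :=
    (G.degree_pos_iff_exists_adj v).mp (by rw [h2 v]; omega)
  obtain ⟨p, hp, hverts⟩ :=
    hcyc.exists_cycle_toSubgraph_verts_eq_connectedComponentSupp (c := G.connectedComponentMk v)
      rfl hv
  have hham : p.IsHamiltonianCycle := by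
    refine ⟨hp, hp.isPath_tail.isHamiltonian_of_mem fun w => ?_⟩
    have hw : w ∈ p.support := by
      rw [← Walk.mem_verts_toSubgraph, hverts, ConnectedComponent.mem_supp_iff,
        ConnectedComponent.eq]
      exact hG.preconnected w v
    rw [Walk.support_tail_of_not_nil _ hp.not_nil]
    exact (p.mem_support_iff.mp hw).elim (fun h => h ▸ Walk.end_mem_tail_support hp.not_nil) id
  have hlen := hham.length_eq
  obtain ⟨f⟩ := (cycleGraph_isContained_iff (by have := hp.three_le_length; omega)).mpr
    ⟨v, p, hp, rfl⟩
  have hbij : Function.Bijective f :=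
    (Fintype.bijective_iff_injective_and_card f).mpr ⟨f.injective, by simp [hlen]⟩
  let e := Equiv.ofBijective f hbij
  refine ⟨(cycleGraph.bicoloring_of_even _ (hlen ▸ heven)).comp ⟨e.symm, fun {x y} hxy => ?_⟩⟩
  rw [← e.apply_symm_apply x, ← e.apply_symm_apply y] at hxy
  refine f.toHom.adj_of_injective_of_degree_le f.injective ?_ hxy
  rw [cycleGraph_degree_eq_two hp.three_le_length]
  exact (h2 _).le

theorem Connected.exists_listColoring_const_of_degree_eq_two [Fintype V] [DecidableRel G.Adj]
    (hG : G.Connected) (h2 : ∀ v, G.degree v = 2) (heven : Even (Fintype.card V))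
    (L₀ : Finset α) (hL₀ : 2 ≤ #L₀) :
    ∃ φ : V → α, (∀ v, φ v ∈ L₀) ∧ ∀ ⦃u v : V⦄, G.Adj u v → φ u ≠ φ v := by
  obtain ⟨c⟩ := hG.nonempty_coloring_bool_of_degree_eq_two h2 heven
  obtain ⟨γ, hγ, δ, hδ, hγδ⟩ := one_lt_card.mp hL₀
  refine ⟨fun x => bif c x then γ else δ, fun x => by cases hx : c x <;> simp [hx, hγ, hδ],
    fun x y hxy => ?_⟩
  have := c.valid hxy
  cases hx : c x <;> cases hy : c y <;> simp_all [Ne.symm hγδ]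

end SimpleGraph

namespace TwoConnected

open SimpleGraph

variable {V α : Type*} [Fintype V] {G : SimpleGraph V} {b c y : V}

lemma reachableWithin (hG : TwoConnected G) {v x y : V} (hx : x ≠ v) (hy : y ≠ v) :
    G.ReachableWithin {v}ᶜ x y :=
  .of_induce (U := {v}ᶜ) ((hG.2 v).preconnected ⟨x, hx⟩ ⟨y, hy⟩)

lemma exists_ne_ne (hG : TwoConnected G) (a b : V) : ∃ z, z ≠ a ∧ z ≠ b := by
  classical
  obtain ⟨z, -, hz⟩ := exists_mem_notMem_of_card_lt_card (s := {a, b}) (t := univ)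
    (card_le_two.trans_lt (by rw [card_univ]; exact hG.1))
  exact ⟨z, by simpa [not_or] using hz⟩

lemma connected (hG : TwoConnected G) : G.Connected := by
  have : Nonempty V := Fintype.card_pos_iff.mp (by linarith [hG.1])
  refine ⟨fun x y => ?_⟩
  obtain ⟨z, hzx, hzy⟩ := hG.exists_ne_ne x y
  obtain ⟨p, -⟩ := hG.reachableWithin hzx.symm hzy.symm
  exact ⟨p⟩

lemma exists_adj_ne (hG : TwoConnected G) {v w : V} (hwv : w ≠ v) : ∃ u, G.Adj u v ∧ u ≠ w := by
  obtain ⟨x, hxv, hxw⟩ := hG.exists_ne_ne v w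
  obtain ⟨p, hp⟩ := hG.reachableWithin hxw hwv.symm
  obtain ⟨d, hd, hfst, hsnd⟩ := p.exists_boundary_dart {v}ᶜ hxv (by simp)
  rw [Set.notMem_compl_iff, Set.mem_singleton_iff] at hsnd
  exact ⟨d.fst, hsnd ▸ d.adj, hp _ (p.dart_fst_mem_support_of_mem_darts hd)⟩

lemma two_le_degree [DecidableRel G.Adj] (hG : TwoConnected G) (v : V) : 2 ≤ G.degree v := by
  obtain ⟨w, hwv, -⟩ := hG.exists_ne_ne v v
  obtain ⟨u₁, hu₁, -⟩ := hG.exists_adj_ne hwv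
  obtain ⟨u₂, hu₂, hne⟩ := hG.exists_adj_ne hu₁.ne
  rw [← card_neighborFinset_eq_degree]
  exact one_lt_card.mpr ⟨u₂, by simpa using hu₂.symm, u₁, by simpa using hu₁.symm, hne⟩

theorem exists_listColoring_of_adj_of_mem_of_notMem [DecidableEq V] [DecidableRel G.Adj]
    [DecidableEq α] (hG : TwoConnected G) (L : V → Finset α) (hL : ∀ v, G.degree v ≤ #(L v))
    {u v : V} (huv : G.Adj u v) {c : α} (hcu : c ∈ L u) (hcv : c ∉ L v) :
    ∃ φ : V → α, (∀ v, φ v ∈ L v) ∧ ∀ ⦃u v : V⦄, G.Adj u v → φ u ≠ φ v := by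
  refine exists_listColoring_of_precoloring L hL {u} (fun _ => c) (by simpa using hcu)
    (by simp) fun x hx => ⟨v, ?_, ?_⟩
  · simpa using hG.reachableWithin (by simpa using hx) huv.ne.symm
  · simp [huv.symm, hcv]

lemma exists_reachableWithin_sdiff_componentWithin (hG : TwoConnected G) {r t : V} (hbr : b ≠ r)
    (htr : t ≠ r) (ht : t ∉ G.componentWithin {b, c}ᶜ y) :
    ∃ s ∈ ({b, c} : Set V), G.ReachableWithin ({r}ᶜ \ G.componentWithin {b, c}ᶜ y) t s := by
  obtain ⟨p, hp⟩ := hG.reachableWithin htr hbr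
  exact p.exists_reachableWithin_sdiff (fun _ hp' q hq => by
    simpa using adj_mem_componentWithin_or hp' q hq) hp ht (by simp)

lemma reachableWithin_sdiff_componentWithin (hG : TwoConnected G) {t : V} (hbc : b ≠ c)
    (htc : t ≠ c) (ht : t ∉ G.componentWithin {b, c}ᶜ y) :
    G.ReachableWithin ({c}ᶜ \ G.componentWithin {b, c}ᶜ y) t b := by
  obtain ⟨s, hs, hts⟩ := hG.exists_reachableWithin_sdiff_componentWithin hbc htc ht
  obtain rfl : s = b := hs.resolve_right hts.right_mem.1
  exact hts

/-- Otherwise a vertex cut off from `b` by `{b', c}` would have its component strictly inside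
that of `y`, as vertices outside the latter reach `b` avoiding it. -/
lemma not_atDistTwo_of_mem_minimal (hG : TwoConnected G)
    (hsep : ∀ b c, G.AtDistTwo b c → ¬G.PreconnectedOn {b, c}ᶜ) (hbc : b ≠ c)
    (hmin : ∀ b' c' y', G.AtDistTwo b' c' → y' ∉ ({b', c'} : Set V) →
      (G.componentWithin {b, c}ᶜ y).ncard ≤ (G.componentWithin {b', c'}ᶜ y').ncard)
    {b' : V} (hb' : b' ∈ G.componentWithin {b, c}ᶜ y) : ¬G.AtDistTwo b' c := by
  intro hb'c
  set A := G.componentWithin {b, c}ᶜ y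
  obtain ⟨y', hy', hy'b⟩ : ∃ y' ∉ ({b', c} : Set V), ¬G.ReachableWithin {b', c}ᶜ y' b := by
    by_contra! h
    exact hsep b' c hb'c fun x hx z hz => (h x hx).trans (h z hz).symm
  have hsub : G.componentWithin {b', c}ᶜ y' ⊆ A := by
    intro t ht
    by_contra htA
    have htc : t ≠ c := fun h => ht.right_mem (by simp [h])
    refine hy'b (ht.trans ((hG.reachableWithin_sdiff_componentWithin hbc htc htA).mono ?_))
    rintro z ⟨hzc, hzA⟩ (rfl | rfl)
    exacts [hzA hb', hzc rfl]
  have hss : G.componentWithin {b', c}ᶜ y' ⊂ A :=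
    (Set.ssubset_iff_of_subset hsub).mpr ⟨b', hb', fun h => h.right_mem (by simp)⟩
  exact (hmin b' c y' hb'c hy').not_gt (Set.ncard_lt_ncard hss (Set.toFinite _))

lemma adj_of_mem_minimal (hG : TwoConnected G)
    (hsep : ∀ b c, G.AtDistTwo b c → ¬G.PreconnectedOn {b, c}ᶜ) (hbc : b ≠ c)
    (hy : y ∉ ({b, c} : Set V))
    (hmin : ∀ b' c' y', G.AtDistTwo b' c' → y' ∉ ({b', c'} : Set V) →
      (G.componentWithin {b, c}ᶜ y).ncard ≤ (G.componentWithin {b', c'}ᶜ y').ncard)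
    {v : V} (hv : v ∈ G.componentWithin {b, c}ᶜ y) : G.Adj v c := by
  set A := G.componentWithin {b, c}ᶜ y
  have hyA : y ∈ A := mem_componentWithin_self hy
  obtain ⟨x₁, hx₁, hx₁c⟩ : ∃ x₁ ∈ A, G.Adj x₁ c := by
    obtain ⟨p, hp⟩ := hG.reachableWithin (x := y) (v := b) (fun h => hy (by simp [h])) hbc.symm
    obtain ⟨d, hd, hfst, hsnd⟩ := p.exists_boundary_dart A hyA (fun h => componentWithin_subset h
      (by simp))
    refine ⟨d.fst, hfst, ?_⟩
    rcases adj_mem_componentWithin_or hfst d.snd d.adj with h | h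
    · exact absurd h hsnd
    · have hb : d.snd ≠ b := hp _ (p.dart_snd_mem_support_of_mem_darts hd)
      obtain rfl : d.snd = c := by simpa [hb] using h
      exact d.adj
  by_contra hvc
  obtain ⟨p, hp⟩ := ReachableWithin.trans (ReachableWithin.symm hv) hx₁
  obtain ⟨d, hd, hfst, hsnd⟩ := p.exists_boundary_dart {z | ¬G.Adj z c} hvc (not_not.mpr hx₁c)
  have hdA : d.fst ∈ A := ReachableWithin.trans hv
    (.of_mem_support p hp (p.dart_fst_mem_support_of_mem_darts hd))
  exact not_atDistTwo_of_mem_minimal hG hsep hbc hmin hdA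
    ⟨fun h => componentWithin_subset hdA (by simp [h]), hfst, d.snd, d.adj.symm, not_not.mp hsnd⟩

lemma exists_adj_notMem_componentWithin (hG : TwoConnected G) (hbc : b ≠ c)
    (hsep : ¬G.PreconnectedOn {b, c}ᶜ) :
    ∃ r, G.Adj r b ∧ r ≠ c ∧ r ∉ G.componentWithin {b, c}ᶜ y := by
  obtain ⟨t, ht, htA⟩ : ∃ t ∉ ({b, c} : Set V), t ∉ G.componentWithin {b, c}ᶜ y := by
    by_contra! h
    exact hsep fun x hx z hz => ReachableWithin.trans (ReachableWithin.symm (h x hx)) (h z hz)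
  obtain ⟨p, hp⟩ := hG.reachableWithin_sdiff_componentWithin hbc (fun h => ht (by simp [h])) htA
  obtain ⟨d, hd, hfst, hsnd⟩ := p.exists_boundary_dart {b}ᶜ (fun h => ht (by simp_all)) (by simp)
  obtain ⟨hfc, hfA⟩ := hp _ (p.dart_fst_mem_support_of_mem_darts hd)
  obtain rfl : d.snd = b := by simpa using hsnd
  exact ⟨d.fst, d.adj, hfc, hfA⟩

/-- Take a neighbour `r` of `b` outside `{c}` and the component `A` of `y`: then `{y, r}` does
not separate, as everything reaches `b` and `A` keeps a second vertex adjacent to `b` and `c`. -/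
lemma exists_atDistTwo_preconnectedOn_of_forall_adj [DecidableRel G.Adj] (hG : TwoConnected G)
    (hδ : ∀ v, 3 ≤ G.degree v) (hbc : G.AtDistTwo b c) (hy : y ∉ ({b, c} : Set V))
    (hsep : ¬G.PreconnectedOn {b, c}ᶜ)
    (hAb : ∀ v ∈ G.componentWithin {b, c}ᶜ y, G.Adj v b)
    (hAc : ∀ v ∈ G.componentWithin {b, c}ᶜ y, G.Adj v c) :
    ∃ b' c', G.AtDistTwo b' c' ∧ G.PreconnectedOn {b', c'}ᶜ := by
  set A := G.componentWithin {b, c}ᶜ y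
  have hyA : y ∈ A := mem_componentWithin_self hy
  have hyb : y ≠ b := fun h => hy (by simp [h])
  obtain ⟨r, hrb, hrc, hrA⟩ := hG.exists_adj_notMem_componentWithin (y := y) hbc.1 hsep
  obtain ⟨z, hyz, hzA⟩ := exists_adj_mem_componentWithin (hδ y) hy
  have hyr : G.AtDistTwo y r := by
    refine ⟨fun h => hrA (h ▸ hyA), fun h => ?_, b, (hAb y hyA).symm, hrb.symm⟩
    rcases adj_mem_componentWithin_or hyA r h with h | h
    · exact hrA h
    · exact (show r = b ∨ r = c by simpa using h).elim hrb.ne hrc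
  refine ⟨y, r, hyr, ?_⟩
  have hbU : b ∈ ({y, r} : Set V)ᶜ := by simp [hyb.symm, hrb.ne.symm]
  have hzr : z ≠ r := fun h => hrA (h ▸ hzA)
  have hzU : z ∈ ({y, r} : Set V)ᶜ := by simp [hyz.ne.symm, hzr]
  have hcy : c ≠ y := fun h => hy (by simp [h])
  have hcU : c ∈ ({y, r} : Set V)ᶜ := by simp [hcy, hrc.symm]
  have hcb : G.ReachableWithin {y, r}ᶜ c b :=
    (ReachableWithin.of_adj (hAc z hzA).symm hcU hzU).trans (.of_adj (hAb z hzA) hzU hbU)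
  have hreach : ∀ x ∈ ({y, r} : Set V)ᶜ, G.ReachableWithin {y, r}ᶜ x b := by
    intro x hx
    by_cases hxA : x ∈ A
    · exact .of_adj (hAb x hxA) hx hbU
    obtain ⟨s, hs, hxs⟩ := hG.exists_reachableWithin_sdiff_componentWithin hrb.ne.symm
      (fun h => hx (by simp [h])) hxA
    replace hxs := hxs.mono (show {r}ᶜ \ A ⊆ {y, r}ᶜ by
      rintro w ⟨hwr, hwA⟩ (rfl | rfl)
      exacts [hwA hyA, hwr rfl])
    rcases hs with rfl | rfl
    · exact hxs
    · exact hxs.trans hcb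
  exact fun x hx x' hx' => (hreach x hx).trans (hreach x' hx').symm

/-- Among all pairs at distance two and vertices `y` outside them, choose one minimising the
component of `y` in `G - {b, c}`; if every such pair separated `G`, this component would be
joined to both `b` and `c`, which in turn yields a non-separating pair. -/
theorem exists_atDistTwo_preconnectedOn [DecidableRel G.Adj] (hG : TwoConnected G)
    (hδ : ∀ v, 3 ≤ G.degree v) (hG' : G ≠ ⊤) :
    ∃ b c, G.AtDistTwo b c ∧ G.PreconnectedOn {b, c}ᶜ := by
  by_contra! hsep
  obtain ⟨b₀, c₀, h₀⟩ := hG.connected.exists_atDistTwo hG'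
  obtain ⟨a₀, ha₀b, ha₀c⟩ := h₀.2.2
  obtain ⟨⟨b, c, y⟩, ⟨hbc, hy⟩, hmin⟩ := Set.exists_min_image
    {t : V × V × V | G.AtDistTwo t.1 t.2.1 ∧ t.2.2 ∉ ({t.1, t.2.1} : Set V)}
    (fun t => (G.componentWithin {t.1, t.2.1}ᶜ t.2.2).ncard) (Set.toFinite _)
    ⟨(b₀, c₀, a₀), h₀, by simp [ha₀b.ne, ha₀c.ne]⟩
  dsimp only at hbc hy
  have hmin' : ∀ b' c' y', G.AtDistTwo b' c' → y' ∉ ({b', c'} : Set V) →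
      (G.componentWithin {b, c}ᶜ y).ncard ≤ (G.componentWithin {b', c'}ᶜ y').ncard :=
    fun b' c' y' h h' => hmin (b', c', y') ⟨h, h'⟩
  have hAc : ∀ v ∈ G.componentWithin {b, c}ᶜ y, G.Adj v c := fun v hv =>
    hG.adj_of_mem_minimal hsep hbc.1 hy hmin' hv
  have hAb : ∀ v ∈ G.componentWithin {b, c}ᶜ y, G.Adj v b := fun v hv => by
    rw [Set.pair_comm] at hy hmin' hv
    exact hG.adj_of_mem_minimal hsep hbc.1.symm hy hmin' hv
  obtain ⟨b', c', h, h'⟩ :=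
    hG.exists_atDistTwo_preconnectedOn_of_forall_adj hδ hbc hy (hsep b c hbc) hAb hAc
  exact hsep b' c' h h'

theorem exists_listColoring_const_of_three_le_degree [DecidableEq V] [DecidableRel G.Adj]
    [DecidableEq α] (hG : TwoConnected G) (hδ : ∀ v, 3 ≤ G.degree v) (hG' : G ≠ ⊤)
    (L₀ : Finset α) (hL₀ : ∀ v, G.degree v ≤ #L₀) :
    ∃ φ : V → α, (∀ v, φ v ∈ L₀) ∧ ∀ ⦃u v : V⦄, G.Adj u v → φ u ≠ φ v := by
  obtain ⟨b, c, ⟨hbc, hnadj, a, hab, hac⟩, hconn⟩ := hG.exists_atDistTwo_preconnectedOn hδ hG'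
  obtain ⟨v₀⟩ : Nonempty V := hG.connected.nonempty
  obtain ⟨γ, hγ⟩ := card_pos.mp ((hδ v₀).trans_lt' (by omega) |>.trans_le (hL₀ v₀))
  refine exists_listColoring_of_precoloring (fun _ => L₀) hL₀ {b, c} (fun _ => γ) (by simp [hγ])
    ?_ fun x hx => ⟨a, ?_, ?_⟩
  · simp only [mem_insert, mem_singleton]
    rintro x (rfl | rfl) y (rfl | rfl) hxy <;> simp_all [adj_comm]
  · rw [coe_pair]
    exact hconn x (by simpa using hx) a (by simp [hab.ne, hac.ne])
  · have hN : G.neighborFinset a ∩ {b, c} = {b, c} :=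
      inter_eq_right.mpr (by simp [insert_subset_iff, hab, hac])
    rw [hN, card_pair hbc, image_const (insert_nonempty b {c})]
    exact (card_le_card inter_subset_right).trans_lt (by simp)

theorem exists_listColoring_const [DecidableEq V] [DecidableRel G.Adj] [DecidableEq α]
    (hG : TwoConnected G) (L₀ : Finset α) (hL₀ : ∀ v, G.degree v = #L₀)
    (hexc : ¬(G = ⊤ ∨ IsOddCycleGraph G)) :
    ∃ φ : V → α, (∀ v, φ v ∈ L₀) ∧ ∀ ⦃u v : V⦄, G.Adj u v → φ u ≠ φ v := by
  push Not at hexc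
  obtain ⟨v₀⟩ := hG.connected.nonempty
  rcases (hG.two_le_degree v₀).lt_or_eq with h3 | h2
  · exact hG.exists_listColoring_const_of_three_le_degree (fun v => hL₀ v ▸ hL₀ v₀ ▸ h3) hexc.1
      L₀ (fun v => (hL₀ v).le)
  · have h2' : ∀ v, G.degree v = 2 := fun v => (hL₀ v).trans ((hL₀ v₀).symm.trans h2.symm)
    have heven : Even (Fintype.card V) :=
      Nat.not_odd_iff_even.mp fun hodd => hexc.2 ⟨hG.connected, h2', hodd⟩
    exact hG.connected.exists_listColoring_const_of_degree_eq_two h2' heven L₀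
      (by rw [← hL₀ v₀, ← h2])

end TwoConnected

/-- Let `G` be a finite simple 2-connected graph and `L` a list assignment with
`|L(v)| ≥ deg(v)` for every vertex `v`.  Then `G` admits a proper coloring from the lists,
unless `G` is a complete graph or an odd cycle and all vertices are assigned the same list. -/
theorem list_coloring_of_twoConnected {V α : Type*} [Fintype V]
    (G : SimpleGraph V) [DecidableRel G.Adj]
    (h2conn : TwoConnected G)
    (L : V → Finset α) (hL : ∀ v : V, G.degree v ≤ (L v).card) :
    (∃ φ : V → α, (∀ v : V, φ v ∈ L v) ∧ ∀ ⦃u v : V⦄, G.Adj u v → φ u ≠ φ v) ∨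
      ((G = ⊤ ∨ IsOddCycleGraph G) ∧ ∀ u v : V, L u = L v) := by
  classical
  have hconn := h2conn.connected
  by_cases hslack : ∃ v, G.degree v < #(L v)
  · obtain ⟨v, hv⟩ := hslack
    exact .inl (hconn.exists_listColoring_of_degree_lt L hL hv)
  by_cases hdiff : ∃ u v c, G.Adj u v ∧ c ∈ L u ∧ c ∉ L v
  · obtain ⟨u, v, c, huv, hcu, hcv⟩ := hdiff
    exact .inl (h2conn.exists_listColoring_of_adj_of_mem_of_notMem L hL huv hcu hcv)
  push Not at hslack hdiff
  have hLeq : ∀ u v, L u = L v := fun u v => (hconn u v).eq_of_forall_adj fun x y hxy =>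
    Subset.antisymm (fun c => hdiff x y c hxy) (fun c => hdiff y x c hxy.symm)
  by_cases hexc : G = ⊤ ∨ IsOddCycleGraph G
  · exact .inr ⟨hexc, hLeq⟩
  obtain ⟨v₀⟩ := hconn.nonempty
  obtain ⟨φ, hφ, hφ'⟩ := h2conn.exists_listColoring_const (L v₀)
    (fun v => hLeq v v₀ ▸ le_antisymm (hL v) (hslack v)) hexc
  exact .inl ⟨φ, fun v => hLeq v v₀ ▸ hφ v, hφ'⟩
end

section
/- Let G be a finite simple graph, T a subgraph of G, and L a list assignment on V(G) \ V(T) such that G is T-critical with respect to L. Let S be a subgraph of G and let G' be an S-component of G. Then G' is S-critical with respect to the restriction of L to V(G') \ V(S). -/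
open SimpleGraph

/-- Given a graph `G`, a subgraph `S` (the precolored part), a subgraph `K` and a list
assignment `L` (relevant on vertices outside `S`), a coloring `ψ` of `S` *extends to an
`L`-coloring of* `K` if there is a coloring `φ` agreeing with `ψ` on `V(S)`, choosing colors
from the lists on vertices of `K` outside `S`, and proper on `K`. -/
def ExtendsToColoring {V α : Type*} {G : SimpleGraph V} (S K : G.Subgraph)
    (L : V → Finset α) (ψ : V → α) : Prop :=
  ∃ φ : V → α, (∀ v ∈ S.verts, φ v = ψ v) ∧
    (∀ v ∈ K.verts, v ∉ S.verts → φ v ∈ L v) ∧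
    ∀ ⦃u v⦄, K.Adj u v → φ u ≠ φ v

/-- `ψ` is a proper coloring of the subgraph `S`. -/
def ProperOn {V α : Type*} {G : SimpleGraph V} (S : G.Subgraph) (ψ : V → α) : Prop :=
  ∀ ⦃u v⦄, S.Adj u v → ψ u ≠ ψ v

/-- The subgraph `H` is `S`-critical with respect to `L`: for every proper subgraph
`K` of `H` containing `S`, some proper coloring of `S` extends to an `L`-coloring of `K`
but not to an `L`-coloring of `H`. -/
def IsCriticalIn {V α : Type*} {G : SimpleGraph V} (H S : G.Subgraph)
    (L : V → Finset α) : Prop :=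
  ∀ K : G.Subgraph, S ≤ K → K ≤ H → K ≠ H →
    ∃ ψ : V → α, ProperOn S ψ ∧
      ExtendsToColoring S K L ψ ∧ ¬ ExtendsToColoring S H L ψ

/-! Given `K` with `S ⊆ K ⊊ G'`, let `M` be the union of `K` with the exterior of `G'`, i.e. with
`G` minus the vertices of `V(G') \ V(S)` and the edges of `G'` not in `S`. Then
`T ⊆ M ⊊ G`, so `T`-criticality of `G` yields a precoloring `ψ` of `T` and an `L`-coloring `φ`
of `M` extending it such that `ψ` does not extend to `G`. The coloring `φ` is the required
coloring of `S`: it extends to `K`, and an extension `φ'` to `G'` could be glued with `φ`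
along `S` to an extension of `ψ` to all of `G`, since every edge of `G` at a vertex of
`V(G') \ V(S)` is an edge of `G'`. -/

namespace SimpleGraph.Subgraph

variable {V α : Type*} {G : SimpleGraph V}

def exterior (G' S : G.Subgraph) : G.Subgraph where
  verts := (G'.verts \ S.verts)ᶜ
  Adj u v := G.Adj u v ∧ u ∉ G'.verts \ S.verts ∧ v ∉ G'.verts \ S.verts ∧
    (G'.Adj u v → S.Adj u v)
  adj_sub h := h.1
  edge_vert h := h.2.1
  symm := ⟨fun _ _ ⟨h, hu, hv, hS⟩ => ⟨h.symm, hv, hu, fun h' => (hS h'.symm).symm⟩⟩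

theorem le_exterior {T S G' : G.Subgraph} (hTG' : T ⊓ G' ≤ S) : T ≤ G'.exterior S := by
  refine ⟨fun v hv ⟨hvG', hvS⟩ => hvS (hTG'.1 ⟨hv, hvG'⟩), fun u v h => ?_⟩
  change G.Adj u v ∧ _
  exact ⟨T.adj_sub h, fun ⟨huG', huS⟩ => huS (hTG'.1 ⟨T.edge_vert h, huG'⟩),
    fun ⟨hvG', hvS⟩ => hvS (hTG'.1 ⟨T.edge_vert h.symm, hvG'⟩), fun h' => hTG'.2 ⟨h, h'⟩⟩

theorem inf_exterior_le (G' S : G.Subgraph) : G' ⊓ G'.exterior S ≤ S :=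
  ⟨fun _ ⟨hvG', hv⟩ => by_contra fun hvS => hv ⟨hvG', hvS⟩, fun _ _ ⟨h, h'⟩ => h'.2.2.2 h⟩

theorem sup_exterior_ne_top {S K G' : G.Subgraph} (hSK : S ≤ K) (hKG' : K ≤ G') (hne : K ≠ G') :
    K ⊔ G'.exterior S ≠ ⊤ := by
  intro htop
  refine hne (le_antisymm hKG' ?_)
  calc G' = G' ⊓ (K ⊔ G'.exterior S) := by rw [htop, inf_top_eq]
    _ = G' ⊓ K ⊔ G' ⊓ G'.exterior S := inf_sup_left _ _ _
    _ ≤ K ⊔ S := sup_le_sup inf_le_right (inf_exterior_le G' S)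
    _ = K := sup_eq_left.mpr hSK

end SimpleGraph.Subgraph

section Coloring

variable {V α : Type*} {G : SimpleGraph V}

def IsColoringExtension (S K : G.Subgraph) (L : V → Finset α) (ψ φ : V → α) : Prop :=
  (∀ v ∈ S.verts, φ v = ψ v) ∧ (∀ v ∈ K.verts, v ∉ S.verts → φ v ∈ L v) ∧
    ∀ ⦃u v⦄, K.Adj u v → φ u ≠ φ v

theorem extendsToColoring_iff {S K : G.Subgraph} {L : V → Finset α} {ψ : V → α} :
    ExtendsToColoring S K L ψ ↔ ∃ φ, IsColoringExtension S K L ψ φ :=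
  Iff.rfl

namespace IsColoringExtension

variable {T S K M G' : G.Subgraph} {L : V → Finset α} {ψ φ : V → α}

theorem properOn (h : IsColoringExtension T M L ψ φ) (hSM : S ≤ M) : ProperOn S φ :=
  fun _ _ hadj => h.2.2 (hSM.2 hadj)

theorem mono (h : IsColoringExtension T M L ψ φ) (hKM : K ≤ M) :
    IsColoringExtension T K L ψ φ :=
  ⟨h.1, fun v hv => h.2.1 v (hKM.1 hv), fun _ _ hadj => h.2.2 (hKM.2 hadj)⟩

theorem restrict (h : IsColoringExtension T M L ψ φ) (hKM : K ≤ M)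
    (hTK : T.verts ∩ K.verts ⊆ S.verts) : IsColoringExtension S K L φ φ :=
  ⟨fun _ _ => rfl, fun v hvK hvS => h.2.1 v (hKM.1 hvK) fun hvT => hvS (hTK ⟨hvT, hvK⟩),
    fun _ _ hadj => h.2.2 (hKM.2 hadj)⟩

theorem glue (hT : T ≤ G'.exterior S)
    (hedges : ∀ ⦃u v : V⦄, G.Adj u v →
      (u ∈ G'.verts \ S.verts ∨ v ∈ G'.verts \ S.verts) → G'.Adj u v)
    (hφ : IsColoringExtension T (G'.exterior S) L ψ φ) {φ' : V → α}
    (hφ' : IsColoringExtension S G' L φ φ') : ExtendsToColoring T ⊤ L ψ := by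
  classical
  set χ := (G'.verts \ S.verts).piecewise φ' φ
  have hχ_ext : ∀ v ∈ (G'.exterior S).verts, χ v = φ v := fun v hv =>
    Set.piecewise_eq_of_notMem _ _ _ hv
  have hχ_int : ∀ v ∈ G'.verts, χ v = φ' v := by
    intro v hvG'
    by_cases hvS : v ∈ S.verts
    · rw [hχ_ext v fun hv => hv.2 hvS, hφ'.1 v hvS]
    · exact Set.piecewise_eq_of_mem _ _ _ ⟨hvG', hvS⟩
  refine ⟨χ, fun v hv => (hχ_ext v (hT.1 hv)).trans (hφ.1 v hv), fun v _ hvT => ?_, ?_⟩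
  · by_cases hv : v ∈ G'.verts \ S.verts
    · rw [hχ_int v hv.1]
      exact hφ'.2.1 v hv.1 hv.2
    · rw [hχ_ext v hv]
      exact hφ.2.1 v hv hvT
  · intro u v hadj
    by_cases hG' : G'.Adj u v
    · rw [hχ_int u hG'.fst_mem, hχ_int v hG'.snd_mem]
      exact hφ'.2.2 hG'
    · have hu : u ∉ G'.verts \ S.verts := fun hu => hG' (hedges hadj (Or.inl hu))
      have hv : v ∉ G'.verts \ S.verts := fun hv => hG' (hedges hadj (Or.inr hv))
      rw [hχ_ext u hu, hχ_ext v hv]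
      exact hφ.2.2 ⟨hadj, hu, hv, fun h => absurd h hG'⟩

end IsColoringExtension

end Coloring

theorem component_isCritical_general {V α : Type*}
    (G : SimpleGraph V) (T : G.Subgraph) (L : V → Finset α)
    (hcrit : IsCriticalIn (⊤ : G.Subgraph) T L)
    (S G' : G.Subgraph)
    (hTG' : T ⊓ G' ≤ S)
    (hedges : ∀ ⦃u v : V⦄, G.Adj u v →
      (u ∈ G'.verts \ S.verts ∨ v ∈ G'.verts \ S.verts) → G'.Adj u v) :
    IsCriticalIn G' S L := by
  intro K hSK hKG' hKne
  obtain ⟨ψ, -, hψK, hψG⟩ := hcrit (K ⊔ G'.exterior S)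
    (le_sup_of_le_right (Subgraph.le_exterior hTG')) le_top
    (Subgraph.sup_exterior_ne_top hSK hKG' hKne)
  obtain ⟨φ, hφ⟩ := extendsToColoring_iff.mp hψK
  have hTK : T.verts ∩ K.verts ⊆ S.verts := fun v ⟨hvT, hvK⟩ => hTG'.1 ⟨hvT, hKG'.1 hvK⟩
  refine ⟨φ, hφ.properOn (hSK.trans le_sup_left),
    extendsToColoring_iff.mpr ⟨φ, hφ.restrict le_sup_left hTK⟩, fun hφG' => ?_⟩
  obtain ⟨φ', hφ'⟩ := extendsToColoring_iff.mp hφG'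
  exact hψG ((hφ.mono le_sup_right).glue (Subgraph.le_exterior hTG') hedges hφ')

/-- If a finite simple graph `G` is `T`-critical with respect to `L`, `S` is a subgraph of `G`,
and `G'` is an `S`-component of `G` (that is, `S ⊆ G'`, `T ∩ G' ⊆ S`, and every edge of `G`
incident with a vertex of `V(G') \ V(S)` belongs to `G'`), then `G'` is `S`-critical with
respect to the restriction of `L`. -/
theorem component_isCritical {V α : Type*} [Fintype V]
    (G : SimpleGraph V) (T : G.Subgraph) (L : V → Finset α)
    (hcrit : IsCriticalIn (⊤ : G.Subgraph) T L)
    (S G' : G.Subgraph)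
    (hSG' : S ≤ G')
    (hTG' : T ⊓ G' ≤ S)
    (hedges : ∀ ⦃u v : V⦄, G.Adj u v →
      (u ∈ G'.verts \ S.verts ∨ v ∈ G'.verts \ S.verts) → G'.Adj u v) :
    IsCriticalIn G' S L :=
  component_isCritical_general G T L hcrit S G' hTG' hedges
end

section
/- Let G be a finite simple triangle-free graph, S a subgraph of G, and L an assignment of lists of colors to the vertices of V(G) \ V(S). Let H be a 2-connected subgraph of G such that V(H) ∩ V(S) = ∅ and |L(v)| ≥ deg_G(v) for each v ∈ V(H). If G is S-critical with respect to L, then H is an induced odd cycle in G. -/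
open SimpleGraph

/-- A subgraph `H` of `G` is 2-connected if it has at least three vertices and deleting any
one of its vertices leaves it connected. -/
def Subgraph.TwoConnected {V : Type*} {G : SimpleGraph V} (H : G.Subgraph) : Prop :=
  3 ≤ H.verts.ncard ∧ ∀ v ∈ H.verts, ((H.deleteVerts {v}).coe).Connected

/-- A subgraph `H` of `G` is an induced odd cycle in `G` if it is an induced subgraph that is
connected, in which every vertex has exactly two neighbors, and whose number of vertices
is odd. -/
def Subgraph.IsInducedOddCycle {V : Type*} {G : SimpleGraph V} (H : G.Subgraph) : Prop :=
  H.IsInduced ∧ H.coe.Connected ∧ (∀ v ∈ H.verts, (H.neighborSet v).ncard = 2) ∧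
    Odd H.verts.ncard

/-!
Let `e` be an edge of `H`. Criticality gives a coloring `φ` of `G - e` whose restriction to `S`
does not extend to `G`; deleting from the list of each vertex of `H` the colors `φ` uses on its
neighbours outside `H` leaves lists `ℓ` with `deg_{G[H]} ≤ |ℓ|` from which `G[H]` cannot be
colored. Without cut vertices this forces an odd cycle, by greedy colorings that end at a vertex
with a spare color. If the lists differ across an edge `uv`, color `u` with a color `v` cannot use;
so all lists equal one list `C`, and every degree is `|C|`. If `|C| ≥ 3`, triangle-freeness yields
a vertex `a` with non-adjacent neighbours `b`, `c` such that `G[H] - b - c` is connected, and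
coloring `b` and `c` alike leaves `a` a spare color. So `G[H]` is a cycle, and even cycles are
2-colorable. Finally `H ≤ G[H]` has minimum degree two, so `H = G[H]`.
-/

open Finset

namespace SimpleGraph

variable {W α : Type*} {Γ Γ' : SimpleGraph W} {s t : Set W} {x y z : W}

def ReachableIn (Γ : SimpleGraph W) (s : Set W) (x y : W) : Prop :=
  ∃ p : Γ.Walk x y, ∀ z ∈ p.support, z ∈ s

namespace ReachableIn

theorem refl (hx : x ∈ s) : Γ.ReachableIn s x x := ⟨.nil, by simpa⟩

theorem symm (h : Γ.ReachableIn s x y) : Γ.ReachableIn s y x := by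
  obtain ⟨p, hp⟩ := h
  exact ⟨p.reverse, fun z hz => hp z (by simpa using hz)⟩

theorem trans (h : Γ.ReachableIn s x y) (h' : Γ.ReachableIn s y z) : Γ.ReachableIn s x z := by
  obtain ⟨p, hp⟩ := h
  obtain ⟨q, hq⟩ := h'
  refine ⟨p.append q, fun w hw => ?_⟩
  rcases Walk.mem_support_append_iff p q |>.1 hw with hw | hw
  exacts [hp w hw, hq w hw]

theorem mono (h : Γ.ReachableIn s x y) (hΓ : Γ ≤ Γ') (hst : s ⊆ t) : Γ'.ReachableIn t x y := by
  obtain ⟨p, hp⟩ := h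
  exact ⟨p.mapLe hΓ, fun z hz => hst (hp z (by simpa using hz))⟩

theorem mem_left (h : Γ.ReachableIn s x y) : x ∈ s := by
  obtain ⟨p, hp⟩ := h
  exact hp x p.start_mem_support

theorem mem_right (h : Γ.ReachableIn s x y) : y ∈ s :=
  h.symm.mem_left

theorem reachable (h : Γ.ReachableIn s x y) : Γ.Reachable x y :=
  h.elim fun p _ => ⟨p⟩

theorem of_forall_reachableIn_mem (h : Γ.ReachableIn s x y)
    (ht : ∀ z, Γ.ReachableIn s x z → z ∈ t) : Γ.ReachableIn t x y := by
  classical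
  obtain ⟨p, hp⟩ := h
  exact ⟨p, fun z hz => ht z ⟨p.takeUntil z hz,
    fun w hw => hp w (p.support_takeUntil_subset_support hz hw)⟩⟩

theorem exists_adj_of_ne (h : Γ.ReachableIn s x y) (hxy : x ≠ y) : ∃ w ∈ s, Γ.Adj x w := by
  obtain ⟨p, hp⟩ := h
  have hnil : ¬ p.Nil := Walk.not_nil_of_ne hxy
  exact ⟨p.snd, hp _ (p.getVert_mem_support 1), p.adj_snd hnil⟩

theorem exists_adj_mem_not_mem (h : Γ.ReachableIn s x y) (hx : x ∈ t) (hy : y ∉ t) :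
    ∃ a ∈ t, ∃ b ∈ s, b ∉ t ∧ Γ.Adj a b := by
  obtain ⟨p, hp⟩ := h
  induction p with
  | nil => exact absurd hx hy
  | @cons x w y hxw q ih =>
    by_cases hw : w ∈ t
    · exact ih hw hy fun z hz => hp z (by simp [hz])
    · exact ⟨x, hx, w, hp w (by simp), hw, hxw⟩

theorem setOf_subset_sdiff_of_not_reachableIn {u z c x w : W} (hxw : Γ.ReachableIn {u, z}ᶜ x w)
    (hwz : ¬ Γ.ReachableIn {u, c}ᶜ w z) :
    {t | Γ.ReachableIn {u, c}ᶜ w t} ⊆ {t | Γ.ReachableIn {u, z}ᶜ x t} \ {c} := fun t ht => by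
  refine ⟨hxw.trans (ht.of_forall_reachableIn_mem fun r hr => ?_),
    (by simpa using ht.mem_right : t ≠ u ∧ t ≠ c).2⟩
  have hru : r ≠ u := (by simpa using hr.mem_right : r ≠ u ∧ r ≠ c).1
  have hrz : r ≠ z := fun hrz => hwz (hrz ▸ hr)
  simp [hru, hrz]

end ReachableIn

theorem Adj.reachableIn (h : Γ.Adj x y) (hx : x ∈ s) (hy : y ∈ s) : Γ.ReachableIn s x y :=
  ⟨h.toWalk, by simp [hx, hy]⟩

section Greedy

variable [DecidableEq W]

/-- A vertex farthest from `a` inside `s` can be deleted without cutting any other vertex off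
from `a`. -/
theorem exists_mem_forall_reachableIn_erase {s : Finset W} {a : W} (ha : a ∈ s)
    (hconn : ∀ v ∈ s, Γ.ReachableIn s v a) :
    ∃ u ∈ s, (u = a → s = {a}) ∧ ∀ v ∈ s.erase u, Γ.ReachableIn (s.erase u) v a := by
  by_cases hs : s = {a}
  · exact ⟨a, ha, fun _ => hs, by simp [hs]⟩
  have hne : (s.erase a).Nonempty := by
    rw [nonempty_iff_ne_empty, Ne, erase_eq_empty_iff]
    exact fun h => h.elim (ne_empty_of_mem ha) hs
  let lengths : W → Set ℕ := fun v =>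
    {n | ∃ p : Γ.Walk v a, p.length = n ∧ ∀ z ∈ p.support, z ∈ s}
  let d : W → ℕ := fun v => sInf (lengths v)
  have hd_le : ∀ v (p : Γ.Walk v a), (∀ z ∈ p.support, z ∈ s) → d v ≤ p.length :=
    fun v p hp => Nat.sInf_le ⟨p, rfl, hp⟩
  have hd_mem : ∀ v ∈ s, ∃ p : Γ.Walk v a, p.length = d v ∧ ∀ z ∈ p.support, z ∈ s :=
    fun v hv => Nat.sInf_mem (s := lengths v) <| (hconn v hv).elim fun p hp => ⟨_, p, rfl, hp⟩
  obtain ⟨u, hu, hmax⟩ := exists_max_image (s.erase a) d hne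
  refine ⟨u, mem_of_mem_erase hu, fun h => absurd h (ne_of_mem_erase hu), fun v hv => ?_⟩
  obtain ⟨hvu, hvs⟩ := mem_erase.1 hv
  obtain ⟨p, hpd, hp⟩ := hd_mem v hvs
  refine ⟨p, fun z hz => mem_erase.2 ⟨?_, hp z hz⟩⟩
  rintro rfl
  -- the part of `p` after `z` would be a shorter walk from `z` to `a`
  have hlen := congrArg Walk.length (p.take_spec hz)
  rw [Walk.length_append] at hlen
  have h1 := hd_le z _ fun w hw => hp w (p.support_dropUntil_subset_support hz hw)
  have h2 : (p.takeUntil z hz).length ≠ 0 := fun h => hvu (Walk.eq_of_length_eq_zero h)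
  have h3 : d v ≤ d z := by
    rcases eq_or_ne v a with rfl | hva
    · exact (hd_le v .nil (by simpa using hvs)).trans (Nat.zero_le _)
    · exact hmax v (mem_erase.2 ⟨hva, hvs⟩)
  omega

variable [Fintype W] [DecidableRel Γ.Adj] [DecidableEq α]

def residualList (Γ : SimpleGraph W) [DecidableRel Γ.Adj] (ℓ : W → Finset α) (φ : W → α)
    (s : Finset W) (v : W) : Finset α :=
  ℓ v \ (Γ.neighborFinset v \ s).image φ

theorem card_inter_le_card_residualList {ℓ : W → Finset α} {v : W} (φ : W → α) (s : Finset W)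
    (h : Γ.degree v ≤ #(ℓ v)) :
    #(Γ.neighborFinset v ∩ s) ≤ #(residualList Γ ℓ φ s v) := by
  have h1 := card_sdiff_add_card_inter (Γ.neighborFinset v) s
  have h2 := le_card_sdiff ((Γ.neighborFinset v \ s).image φ) (ℓ v)
  have h3 := card_image_le (s := Γ.neighborFinset v \ s) (f := φ)
  rw [card_neighborFinset_eq_degree] at h1
  unfold residualList
  omega

/-- Coloring `u` with `c` and deleting it from `s` costs a vertex `v` at most one residual color,
and only if `v` loses its uncolored neighbour `u`. -/
theorem card_inter_erase_add_card_residualList_le (ℓ : W → Finset α) (φ : W → α)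
    {s : Finset W} {u : W} (hu : u ∈ s) (c : α) (v : W) :
    #(Γ.neighborFinset v ∩ s.erase u) + #(residualList Γ ℓ φ s v) ≤
      #(Γ.neighborFinset v ∩ s) + #(residualList Γ ℓ (Function.update φ u c) (s.erase u) v) := by
  have hsub : ∀ x ∈ residualList Γ ℓ φ s v, (Γ.Adj v u → x ≠ c) →
      x ∈ residualList Γ ℓ (Function.update φ u c) (s.erase u) v := fun x hx hxc => by
    simp only [residualList, mem_sdiff, mem_image, mem_neighborFinset, mem_erase, not_exists,
      not_and] at hx ⊢
    refine ⟨hx.1, fun w ⟨hvw, hw⟩ hwx => ?_⟩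
    rcases eq_or_ne w u with rfl | hwu
    · exact hxc hvw (by simpa using hwx.symm)
    · rw [Function.update_of_ne hwu] at hwx
      exact hx.2 w ⟨hvw, hw hwu⟩ hwx
  by_cases hvu : Γ.Adj v u
  · have h1 : Γ.neighborFinset v ∩ s.erase u = (Γ.neighborFinset v ∩ s).erase u := by
      ext; simp only [mem_inter, mem_neighborFinset, mem_erase]; tauto
    have h2 := card_erase_add_one (s := Γ.neighborFinset v ∩ s) (a := u) (by simp [hvu, hu])
    have h3 := le_card_sdiff {c} (residualList Γ ℓ φ s v)
    have h4 := card_le_card fun x hx =>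
      hsub x (mem_sdiff.1 hx).1 fun _ hxc => (mem_sdiff.1 hx).2 (mem_singleton.2 hxc)
    rw [card_singleton] at h3
    rw [h1]
    omega
  · have h1 : Γ.neighborFinset v ∩ s.erase u = Γ.neighborFinset v ∩ s := by
      ext w; simp only [mem_inter, mem_neighborFinset, mem_erase]
      exact ⟨fun h => ⟨h.1, h.2.2⟩, fun h => ⟨h.1, fun hwu => hvu (hwu ▸ h.1), h.2⟩⟩
    rw [h1]
    have := card_le_card fun x hx => hsub x hx fun h => absurd h hvu
    omega

/-- Greedy list coloring of `s`, extending `φ`, in order of decreasing distance to `a`: every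
vertex but `a` still has an uncolored neighbour when its turn comes. -/
theorem exists_extension_of_reachableIn (ℓ : W → Finset α) (a : W) (s : Finset W) (φ : W → α)
    (hconn : ∀ v ∈ s, Γ.ReachableIn s v a)
    (hdeg : ∀ v ∈ s, #(Γ.neighborFinset v ∩ s) ≤ #(residualList Γ ℓ φ s v))
    (hsur : a ∈ s → #(Γ.neighborFinset a ∩ s) < #(residualList Γ ℓ φ s a)) :
    ∃ σ : W → α, (∀ v ∉ s, σ v = φ v) ∧ (∀ v ∈ s, σ v ∈ ℓ v) ∧
      ∀ ⦃u v⦄, Γ.Adj u v → u ∈ s → σ u ≠ σ v := by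
  induction s using Finset.strongInduction generalizing φ with
  | H s ih =>
  rcases s.eq_empty_or_nonempty with rfl | ⟨v₀, hv₀⟩
  · exact ⟨φ, fun _ _ => rfl, by simp, by simp⟩
  obtain ⟨u, hus, hua, hconn'⟩ :=
    exists_mem_forall_reachableIn_erase (hconn v₀ hv₀).mem_right hconn
  obtain ⟨c, hc⟩ : (residualList Γ ℓ φ s u).Nonempty := by
    rw [← card_pos]
    by_cases h : u = a
    · subst h; exact (Nat.zero_le _).trans_lt (hsur hus)
    · obtain ⟨w, hws, huw⟩ := (hconn u hus).exists_adj_of_ne h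
      have : 0 < #(Γ.neighborFinset u ∩ s) :=
        card_pos.2 ⟨w, mem_inter.2 ⟨(mem_neighborFinset Γ u w).2 huw, hws⟩⟩
      exact this.trans_le (hdeg u hus)
  have hstep := card_inter_erase_add_card_residualList_le (Γ := Γ) ℓ φ hus c
  obtain ⟨σ, hσφ, hσℓ, hσ⟩ := ih (s.erase u) (erase_ssubset hus) (Function.update φ u c) hconn'
    (fun v hv => by have := hstep v; have := hdeg v (mem_of_mem_erase hv); omega)
    (fun ha => by
      have := hstep a
      have := hsur (mem_of_mem_erase ha)
      omega)
  simp only [residualList, mem_sdiff, mem_image, mem_neighborFinset, not_exists, not_and] at hc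
  have hσu : σ u = c := by simpa using hσφ u (by simp)
  refine ⟨σ, fun v hv => ?_, fun v hv => ?_, fun x y hxy hx => ?_⟩
  · rw [hσφ v (fun h => hv (mem_of_mem_erase h)), Function.update_of_ne (by grind)]
  · by_cases hvu : v = u
    · exact hvu ▸ hσu ▸ hc.1
    · exact hσℓ v (mem_erase.2 ⟨hvu, hv⟩)
  · by_cases hxu : x = u
    · subst hxu
      by_cases hy : y ∈ s.erase x
      · exact (hσ hxy.symm hy).symm
      · have hys : y ∉ s := fun h => hy (mem_erase.2 ⟨hxy.ne', h⟩)
        rw [hσu, hσφ y hy, Function.update_of_ne hxy.ne']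
        exact fun h => hc.2 y ⟨hxy, hys⟩ h.symm
    · exact hσ hxy (mem_erase.2 ⟨hxu, hx⟩)

end Greedy

def ListColorable (Γ : SimpleGraph W) (ℓ : W → Finset α) : Prop :=
  ∃ σ : W → α, (∀ v, σ v ∈ ℓ v) ∧ ∀ ⦃x y⦄, Γ.Adj x y → σ x ≠ σ y

theorem listColorable_const_of_colorable {C : Finset α} (h : Γ.Colorable #C) :
    Γ.ListColorable fun _ => C := by
  obtain ⟨κ⟩ := h
  exact ⟨fun v => C.equivFin.symm (κ v), fun v => (C.equivFin.symm (κ v)).2,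
    fun x y hxy heq => κ.valid hxy (C.equivFin.symm.injective (Subtype.ext heq))⟩

def PreconnectedIn (Γ : SimpleGraph W) (s : Set W) : Prop :=
  ∀ x ∈ s, ∀ y ∈ s, Γ.ReachableIn s x y

def NoCutVertex (Γ : SimpleGraph W) : Prop :=
  ∀ u, Γ.PreconnectedIn {u}ᶜ

namespace NoCutVertex

theorem mono (h : Γ.NoCutVertex) (hΓ : Γ ≤ Γ') : Γ'.NoCutVertex :=
  fun u x hx y hy => (h u x hx y hy).mono hΓ le_rfl

variable [Fintype W]

theorem exists_ne_ne (hcard : 3 ≤ Fintype.card W) (x y : W) : ∃ u, u ≠ x ∧ u ≠ y := by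
  classical
  by_contra! h
  have hsub : (univ : Finset W) ⊆ {x, y} := fun u _ => by
    rcases eq_or_ne u x with rfl | hu
    exacts [mem_insert_self _ _, by simp [h u hu]]
  have := (card_le_card hsub).trans card_le_two
  rw [card_univ] at this
  omega

theorem connected (h : Γ.NoCutVertex) (hcard : 3 ≤ Fintype.card W) : Γ.Connected := by
  have : Nonempty W := Fintype.card_pos_iff.1 (by omega)
  refine Connected.mk fun x y => ?_
  obtain ⟨u, hux, huy⟩ := exists_ne_ne hcard x y
  exact (h u x hux.symm y huy.symm).reachable

theorem exists_adj_ne (h : Γ.NoCutVertex) (hcard : 3 ≤ Fintype.card W) {u v : W} (hvu : v ≠ u) :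
    ∃ w, Γ.Adj v w ∧ w ≠ u := by
  obtain ⟨x, hxu, hxv⟩ := exists_ne_ne hcard u v
  obtain ⟨w, hw, hvw⟩ := (h u v hvu x hxu).exists_adj_of_ne hxv.symm
  exact ⟨w, hvw, hw⟩

theorem two_le_degree [DecidableRel Γ.Adj] (h : Γ.NoCutVertex) (hcard : 3 ≤ Fintype.card W)
    (v : W) : 2 ≤ Γ.degree v := by
  obtain ⟨u, hu, -⟩ := exists_ne_ne hcard v v
  obtain ⟨w₁, hw₁, -⟩ := h.exists_adj_ne hcard hu.symm
  obtain ⟨w₂, hw₂, hne⟩ := h.exists_adj_ne hcard hw₁.ne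
  rw [← card_neighborFinset_eq_degree]
  exact one_lt_card.2 ⟨w₁, by simpa using hw₁, w₂, by simpa using hw₂, hne.symm⟩

end NoCutVertex

section ListColoring

variable [Fintype W] [DecidableEq W] [DecidableRel Γ.Adj] [DecidableEq α] {ℓ : W → Finset α}

theorem listColorable_of_degree_lt (hconn : Γ.Connected) (hdeg : ∀ v, Γ.degree v ≤ #(ℓ v))
    {a : W} (ha : Γ.degree a < #(ℓ a)) : Γ.ListColorable ℓ := by
  obtain ⟨c₀, -⟩ := card_pos.1 ((Nat.zero_le _).trans_lt ha)
  have hres : ∀ v, residualList Γ ℓ (fun _ => c₀) univ v = ℓ v := by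
    simp [residualList, sdiff_eq_empty_iff_subset.2 (subset_univ _)]
  obtain ⟨σ, -, hσℓ, hσ⟩ := exists_extension_of_reachableIn ℓ a univ (fun _ => c₀)
    (fun v _ => (hconn.preconnected v a).elim fun p => ⟨p, by simp⟩)
    (fun v _ => by simpa [hres] using hdeg v) (fun _ => by simpa [hres] using ha)
  exact ⟨σ, fun v => hσℓ v (mem_univ v), fun x y hxy => hσ hxy (mem_univ x)⟩

/-- Lists that differ across an edge `uv`: give `u` a color `v` cannot use, then `v` has a spare
color for the greedy coloring of `Γ - u`. -/
theorem NoCutVertex.listColorable_of_not_mem (h : Γ.NoCutVertex)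
    (hdeg : ∀ v, Γ.degree v ≤ #(ℓ v)) {u v : W} (huv : Γ.Adj u v) {c : α} (hcu : c ∈ ℓ u)
    (hcv : c ∉ ℓ v) : Γ.ListColorable ℓ := by
  have hsur : #(Γ.neighborFinset v ∩ univ.erase u) <
      #(residualList Γ ℓ (fun _ => c) (univ.erase u) v) := by
    have hlt : #(Γ.neighborFinset v ∩ univ.erase u) < #(Γ.neighborFinset v) :=
      card_lt_card ⟨inter_subset_left, fun hsub => by
        simpa using (mem_inter.1 (hsub ((mem_neighborFinset _ _ _).2 huv.symm))).2⟩
    have hsub : ℓ v ⊆ residualList Γ ℓ (fun _ => c) (univ.erase u) v := fun x hx => by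
      simp only [residualList, mem_sdiff, mem_image]
      exact ⟨hx, fun ⟨_, _, hcx⟩ => hcv (hcx ▸ hx)⟩
    rw [card_neighborFinset_eq_degree] at hlt
    exact hlt.trans_le ((hdeg v).trans (card_le_card hsub))
  obtain ⟨σ, hσφ, hσℓ, hσ⟩ := exists_extension_of_reachableIn ℓ v (univ.erase u) (fun _ => c)
    (fun w hw => (h u w (ne_of_mem_erase hw) v huv.ne').mono le_rfl
      fun z hz => by simpa using hz)
    (fun w _ => card_inter_le_card_residualList _ _ (hdeg w)) fun _ => hsur
  refine ⟨σ, fun w => ?_, fun x y hxy => ?_⟩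
  · by_cases hw : w = u
    · subst hw; simpa [hσφ w] using hcu
    · exact hσℓ w (by simp [hw])
  · by_cases hx : x = u
    · subst hx; exact (hσ hxy.symm (by simp [hxy.ne'])).symm
    · exact hσ hxy (by simp [hx])

/-- Color the two non-adjacent neighbours `b`, `c` of `a` alike; then `a` has a spare color for
the greedy coloring of `Γ - b - c`. -/
theorem listColorable_const_of_adj_of_adj (C : Finset α) (hreg : ∀ v, Γ.degree v = #C)
    {a b c : W} (hab : Γ.Adj a b) (hac : Γ.Adj a c) (hbc : b ≠ c) (hnbc : ¬ Γ.Adj b c)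
    (hconn : Γ.PreconnectedIn {b, c}ᶜ) :
    Γ.ListColorable fun _ => C := by
  set s : Finset W := univ \ {b, c}
  have hs : ∀ {x}, x ∈ s ↔ x ≠ b ∧ x ≠ c := by simp [s]
  have hna : Γ.neighborFinset a \ s = {b, c} := by
    ext x
    simp only [mem_sdiff, mem_neighborFinset, hs, mem_insert, mem_singleton]
    grind
  have hCa : #C = #(Γ.neighborFinset a ∩ s) + 2 := by
    have := card_sdiff_add_card_inter (Γ.neighborFinset a) s
    rw [hna, card_pair hbc, card_neighborFinset_eq_degree, hreg] at this
    omega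
  obtain ⟨c₀, hc₀⟩ := card_pos.1 (show 0 < #C by omega)
  have hres : residualList Γ (fun _ => C) (fun _ => c₀) s a = C.erase c₀ := by
    rw [residualList, hna, image_const (insert_nonempty _ _), sdiff_singleton_eq_erase]
  obtain ⟨σ, hσφ, hσℓ, hσ⟩ := exists_extension_of_reachableIn (fun _ => C) a s (fun _ => c₀)
    (fun v hv => (hconn v (by simpa using hs.1 hv) a (by simp [hab.ne, hac.ne])).mono le_rfl
      fun z hz => by simpa [s] using hz)
    (fun v _ => card_inter_le_card_residualList _ _ (hreg v).le)
    (fun _ => by rw [hres, card_erase_of_mem hc₀]; omega)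
  have hσs : ∀ v ∉ s, σ v = c₀ := hσφ
  refine ⟨σ, fun v => ?_, fun x y hxy => ?_⟩
  · by_cases hv : v ∈ s
    exacts [hσℓ v hv, hσs v hv ▸ hc₀]
  · by_cases hx : x ∈ s
    · exact hσ hxy hx
    by_cases hy : y ∈ s
    · exact (hσ hxy.symm hy).symm
    simp only [hs, not_and_or, not_not] at hx hy
    refine absurd ?_ hnbc
    rcases hx with rfl | rfl <;> rcases hy with rfl | rfl
    all_goals first | exact hxy | exact hxy.symm | exact (hxy.ne rfl).elim

end ListColoring

theorem exists_adj_ne_ne [Fintype W] [DecidableRel Γ.Adj] {v : W} (hv : 3 ≤ Γ.degree v)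
    (x y : W) : ∃ w, Γ.Adj v w ∧ w ≠ x ∧ w ≠ y := by
  classical
  have h := le_card_sdiff {x, y} (Γ.neighborFinset v)
  rw [card_neighborFinset_eq_degree] at h
  have := card_le_two (a := x) (b := y)
  obtain ⟨w, hw⟩ := card_pos.1 (show 0 < #(Γ.neighborFinset v \ {x, y}) by omega)
  simp only [mem_sdiff, mem_neighborFinset, mem_insert, mem_singleton, not_or] at hw
  exact ⟨w, hw.1, hw.2⟩

/-- A walk from `w` to `z` avoiding `u` leaves the component of `w` in `Γ - u - z` only through
`z`, and that component misses `q`. -/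
theorem NoCutVertex.reachableIn_of_not_reachableIn (h : Γ.NoCutVertex) {u z w q : W}
    (hwu : w ≠ u) (hzu : z ≠ u) (hqz : q ≠ z) (hwq : ¬ Γ.ReachableIn {u, z}ᶜ w q) :
    Γ.ReachableIn {u, q}ᶜ w z := by
  rcases eq_or_ne w z with rfl | hwz
  · exact .refl (by simp [hwu, hqz.symm])
  set D := {t | Γ.ReachableIn {u, z}ᶜ w t}
  have hwD : w ∈ D := .refl (by simp [hwu, hwz])
  have hzD : z ∉ D := fun hz => by simpa using hz.mem_right
  obtain ⟨a, haD, b, hb, hbD, hab⟩ := (h u w hwu z hzu).exists_adj_mem_not_mem hwD hzD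
  have hbz : b = z := by
    by_contra hbz
    exact hbD (haD.trans (hab.reachableIn haD.mem_right (by simp_all)))
  subst hbz
  have hwa : Γ.ReachableIn {u, q}ᶜ w a := haD.of_forall_reachableIn_mem fun r hr => by
    have hru : r ≠ u := fun hru => by simpa [hru] using hr.mem_right
    have hrq : r ≠ q := fun hrq => hwq (hrq ▸ hr)
    simp [hru, hrq]
  exact hwa.trans (hab.reachableIn hwa.mem_right (by simp [hzu, hqz.symm]))

/-- Take `z` and `x` with the component `C` of `x` in `Γ - u₀ - z` as small as possible, among
those missing a vertex of `Γ - u₀ - z`. A neighbour `a ∈ C` of `u₀` and a further neighbour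
`c ∈ C` of `a` then work: any vertex of `C` cut off from `z` by `u₀, c` would have a
smaller component. -/
theorem NoCutVertex.exists_adj_adj_preconnectedIn_of_not [Fintype W] [DecidableRel Γ.Adj]
    (h : Γ.NoCutVertex) (hdeg : ∀ v, 3 ≤ Γ.degree v) {u₀ z₀ : W} (hz₀ : z₀ ≠ u₀)
    (hsep : ¬ Γ.PreconnectedIn {u₀, z₀}ᶜ) :
    ∃ a c, Γ.Adj a u₀ ∧ Γ.Adj a c ∧ c ≠ u₀ ∧ Γ.PreconnectedIn {u₀, c}ᶜ := by
  let P : Set (W × W) := {q | q.1 ≠ u₀ ∧ q.2 ∈ ({u₀, q.1}ᶜ : Set W) ∧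
    ¬ ∀ y ∈ ({u₀, q.1}ᶜ : Set W), Γ.ReachableIn {u₀, q.1}ᶜ q.2 y}
  let comp : W × W → Set W := fun q => {y | Γ.ReachableIn {u₀, q.1}ᶜ q.2 y}
  have hP : P.Nonempty := by
    by_contra hP
    exact hsep fun x hx y hy =>
      by_contra fun hxy => hP ⟨(z₀, x), hz₀, hx, fun h => hxy (h y hy)⟩
  obtain ⟨⟨z, x⟩, ⟨hzu, hx, hxy⟩, hmin⟩ :=
    Set.exists_min_image P (fun q => (comp q).ncard) (Set.toFinite _) hP
  obtain ⟨y, hy, hxy⟩ := not_forall₂.1 hxy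
  set C := comp (z, x)
  have hCs : ∀ {t}, t ∈ C → t ≠ u₀ ∧ t ≠ z := fun ht => by simpa using ht.mem_right
  have hxC : x ∈ C := .refl hx
  have hclosed : ∀ {t t'}, t ∈ C → Γ.Adj t t' → t' ≠ u₀ → t' ≠ z → t' ∈ C :=
    fun ht htt' h₁ h₂ => ht.trans (htt'.reachableIn ht.mem_right (by simp [h₁, h₂]))
  obtain ⟨a, haC, hau⟩ : ∃ a ∈ C, Γ.Adj a u₀ := by
    obtain ⟨a, haC, b, hb, hbC, hab⟩ :=
      (h z x (by simp_all) y (by simp_all)).exists_adj_mem_not_mem hxC hxy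
    have hbu : b = u₀ := by
      by_contra hbu
      exact hbC (hclosed haC hab hbu hb)
    exact ⟨a, haC, hbu ▸ hab⟩
  obtain ⟨c, hac, hcu, hcz⟩ := exists_adj_ne_ne (hdeg a) u₀ z
  have hcC : c ∈ C := hclosed haC hac hcu hcz
  refine ⟨a, c, hau, hac, hcu, ?_⟩
  suffices hz : ∀ w ∈ ({u₀, c}ᶜ : Set W), Γ.ReachableIn {u₀, c}ᶜ w z from
    fun w hw w' hw' => (hz w hw).trans (hz w' hw').symm
  intro w hw
  have hwu : w ≠ u₀ := by simp_all
  by_contra hwz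
  by_cases hwC : w ∈ C
  · have hwP : (c, w) ∈ P :=
      ⟨hcu, hw, fun hall => hwz (hall z (by simp [(hCs hcC).2.symm, hzu]))⟩
    have := (Set.ncard_le_ncard (hwC.setOf_subset_sdiff_of_not_reachableIn hwz)
      (Set.toFinite _)).trans_lt
      (Set.ncard_sdiff_singleton_lt_of_mem hcC (Set.toFinite _))
    exact (hmin _ hwP).not_gt this
  · exact hwz (h.reachableIn_of_not_reachableIn hwu hzu (hCs hcC).2
      fun hwc => hwC (hcC.trans hwc.symm))

theorem NoCutVertex.exists_adj_adj_preconnectedIn [Fintype W] [DecidableRel Γ.Adj]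
    (h : Γ.NoCutVertex) (htf : Γ.CliqueFree 3) (hdeg : ∀ v, 3 ≤ Γ.degree v) (b : W) :
    ∃ a c, Γ.Adj a b ∧ Γ.Adj a c ∧ b ≠ c ∧ ¬ Γ.Adj b c ∧ Γ.PreconnectedIn {b, c}ᶜ := by
  classical
  obtain ⟨a, c, hab, hac, hcb, hconn⟩ :
      ∃ a c, Γ.Adj a b ∧ Γ.Adj a c ∧ c ≠ b ∧ Γ.PreconnectedIn {b, c}ᶜ := by
    by_cases hb : ∀ z ≠ b, Γ.PreconnectedIn {b, z}ᶜ
    · obtain ⟨a, hba, -⟩ := exists_adj_ne_ne (hdeg b) b b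
      obtain ⟨c, hac, hcb, -⟩ := exists_adj_ne_ne (hdeg a) b b
      exact ⟨a, c, hba.symm, hac, hcb, hb c hcb⟩
    · obtain ⟨z, hz, hsep⟩ := not_forall₂.1 hb
      exact h.exists_adj_adj_preconnectedIn_of_not hdeg hz hsep
  exact ⟨a, c, hab, hac, hcb.symm,
    fun hbc => htf {a, b, c} (is3Clique_triple_iff.2 ⟨hab, hac, hbc⟩), hconn⟩

theorem Connected.exists_isHamiltonianCycle_of_degree_eq_two [Fintype W] [DecidableEq W]
    [DecidableRel Γ.Adj] (hconn : Γ.Connected) (hreg : ∀ v, Γ.degree v = 2) :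
    ∃ (v : W) (p : Γ.Walk v v),
      p.IsHamiltonianCycle ∧ ∀ x y, Γ.Adj x y → p.toSubgraph.Adj x y := by
  obtain ⟨v⟩ := hconn.nonempty
  have hcyc : Γ.IsCycles := fun w _ => by
    rw [← hreg w, ← card_neighborFinset_eq_degree, ← Set.ncard_coe_finset, coe_neighborFinset]
  obtain ⟨w, hw⟩ := card_pos.1 (show 0 < #(Γ.neighborFinset v) by simp [hreg])
  obtain ⟨p, hp, hverts⟩ := hcyc.exists_cycle_toSubgraph_verts_eq_connectedComponentSupp
    (c := Γ.connectedComponentMk v) rfl ⟨w, by simpa using hw⟩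
  have hsupp : ∀ x, x ∈ p.support := fun x => by
    rw [← Walk.mem_verts_toSubgraph, hverts, ConnectedComponent.mem_supp_iff]
    exact ConnectedComponent.eq.2 (hconn.preconnected x v)
  refine ⟨v, p, ⟨hp, hp.isPath_tail.isHamiltonian_of_mem fun x => ?_⟩, fun x y hxy =>
    (hp.adj_toSubgraph_iff_of_isCycles hcyc (p.mem_verts_toSubgraph.2 (hsupp x)) y).2 hxy⟩
  rw [Walk.support_tail_of_not_nil _ hp.not_nil]
  rcases p.mem_support_iff.1 (hsupp x) with rfl | h
  exacts [p.end_mem_tail_support hp.not_nil, h]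

/-- Color each vertex by the parity of its position on the cycle; the closing edge joins
positions `length - 1` and `0`, of opposite parity as the length is even. -/
theorem Walk.IsHamiltonianCycle.colorable_two [DecidableEq W] {v : W} {p : Γ.Walk v v}
    (hp : p.IsHamiltonianCycle) (hadj : ∀ x y, Γ.Adj x y → p.toSubgraph.Adj x y)
    (heven : Even p.length) : Γ.Colorable 2 := by
  have hidx : ∀ x, ∃ i, i < p.length ∧ p.getVert i = x := fun x => by
    obtain ⟨i, rfl, hi⟩ := Walk.mem_support_iff_exists_getVert.1 (hp.mem_support x)
    rcases hi.lt_or_eq with hi | rfl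
    · exact ⟨i, hi, rfl⟩
    · exact ⟨0, hp.three_le_length.trans_lt' (by norm_num), by simp⟩
  let idx : W → ℕ := fun x => Nat.find (hidx x)
  have hidx_getVert : ∀ i < p.length, idx (p.getVert i) = i := fun i hi => by
    change Nat.find (hidx _) = i
    have := Nat.find_spec (hidx (p.getVert i))
    exact hp.getVert_injOn' (by simp only [Set.mem_ofPred_eq]; omega)
      (by simp only [Set.mem_ofPred_eq]; omega) this.2
  have hparity : ∀ i < p.length,
      (Even (idx (p.getVert i)) ↔ ¬ Even (idx (p.getVert (i + 1)))) := by
    intro i hi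
    rw [hidx_getVert i hi]
    rcases (show i + 1 ≤ p.length from hi).lt_or_eq with hi' | hi'
    · rw [hidx_getVert (i + 1) hi', Nat.even_add_one, not_not]
    · rw [hi', Walk.getVert_length, ← p.getVert_zero, hidx_getVert 0 (by omega)]
      rw [← hi', Nat.even_add_one] at heven
      simpa using heven
  refine (Coloring.mk (fun x => decide (Even (idx x))) fun {x y} hxy => ?_).colorable
  obtain ⟨i, he, hi⟩ := (Walk.toSubgraph_adj_iff p).1 (hadj x y hxy)
  have := hparity i hi
  rcases Sym2.eq_iff.1 he with ⟨rfl, rfl⟩ | ⟨rfl, rfl⟩ <;>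
    simp only [ne_eq, decide_eq_decide] <;> tauto

theorem NoCutVertex.degree_eq_two_and_odd_card_of_not_listColorable [Fintype W] [DecidableEq W]
    [DecidableRel Γ.Adj] [DecidableEq α] (h : Γ.NoCutVertex) (hcard : 3 ≤ Fintype.card W)
    (htf : Γ.CliqueFree 3) {ℓ : W → Finset α} (hdeg : ∀ v, Γ.degree v ≤ #(ℓ v))
    (hnc : ¬ Γ.ListColorable ℓ) : (∀ v, Γ.degree v = 2) ∧ Odd (Fintype.card W) := by
  have hconn := h.connected hcard
  obtain ⟨v₀⟩ := hconn.nonempty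
  have hedge : ∀ ⦃u v⦄, Γ.Adj u v → ℓ u ⊆ ℓ v := fun u v huv c hc =>
    by_contra fun hcv => hnc (h.listColorable_of_not_mem hdeg huv hc hcv)
  have hconst : ∀ v, ℓ v = ℓ v₀ := fun v => by
    obtain ⟨p⟩ := hconn.preconnected v v₀
    induction p with
    | nil => rfl
    | cons huv _ ih => exact (Subset.antisymm (hedge huv) (hedge huv.symm)).trans ih
  set C := ℓ v₀
  rw [show ℓ = fun _ => C from funext hconst] at hdeg hnc
  have hreg : ∀ v, Γ.degree v = #C := fun v =>
    (hdeg v).eq_of_not_lt fun hlt => hnc (listColorable_of_degree_lt hconn hdeg hlt)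
  have hC : #C = 2 := by
    refine le_antisymm (not_lt.1 fun h3 => ?_) (hreg v₀ ▸ h.two_le_degree hcard v₀)
    obtain ⟨a, c, hab, hac, hbc, hnbc, hconn'⟩ :=
      h.exists_adj_adj_preconnectedIn htf (fun v => (hreg v).symm ▸ h3) v₀
    exact hnc (listColorable_const_of_adj_of_adj C hreg hab hac hbc hnbc hconn')
  have hreg₂ : ∀ v, Γ.degree v = 2 := fun v => (hreg v).trans hC
  refine ⟨hreg₂, Nat.not_even_iff_odd.1 fun heven => hnc ?_⟩
  obtain ⟨v, p, hp, hadj⟩ := hconn.exists_isHamiltonianCycle_of_degree_eq_two hreg₂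
  exact listColorable_const_of_colorable (hC ▸ hp.colorable_two hadj (hp.length_eq ▸ heven))

theorem eq_of_le_of_degree_le [Fintype W] [DecidableRel Γ.Adj] [DecidableRel Γ'.Adj]
    (hle : Γ ≤ Γ') (hdeg : ∀ v, Γ'.degree v ≤ Γ.degree v) : Γ = Γ' := by
  ext v w
  have hsub : Γ.neighborFinset v ⊆ Γ'.neighborFinset v := fun w hw => by
    simpa using hle (by simpa using hw)
  have heq := eq_of_subset_of_card_le hsub (by simpa using hdeg v)
  simpa using congrArg (w ∈ ·) heq

theorem Subgraph.noCutVertex_coe {V : Type*} {G : SimpleGraph V} {H : G.Subgraph}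
    (h : ∀ v ∈ H.verts, (H.deleteVerts {v}).coe.Connected) : H.coe.NoCutVertex := by
  intro u x hx y hy
  obtain ⟨p⟩ := (h u u.2).preconnected ⟨x, x.2, fun hxu => hx (Subtype.ext hxu)⟩
    ⟨y, y.2, fun hyu => hy (Subtype.ext hyu)⟩
  refine ⟨p.map (Subgraph.inclusion H.deleteVerts_le), fun z hz => ?_⟩
  obtain ⟨t, -, rfl⟩ := List.mem_map.1 ((Walk.support_map _ _).symm ▸ hz)
  exact fun hzu => t.2.2 (congrArg Subtype.val hzu)

section Critical

variable {V : Type*} [Fintype V] [DecidableEq V] {G : SimpleGraph V} [DecidableRel G.Adj]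

theorem degree_induce_eq_card_inter (s : Set V) [DecidablePred (· ∈ s)] (v : s) :
    (G.induce s).degree v = #(G.neighborFinset v ∩ s.toFinset) := by
  rw [← card_neighborFinset_eq_degree, ← card_map (Function.Embedding.subtype _)]
  congr 1
  ext w
  simp only [mem_map, mem_neighborFinset, comap_adj, Function.Embedding.subtype_apply,
    mem_inter, Set.mem_toFinset]
  exact ⟨fun ⟨t, ht, hw⟩ => hw ▸ ⟨ht, t.2⟩, fun ⟨hw, hws⟩ => ⟨⟨w, hws⟩, hw, rfl⟩⟩

/-- A coloring `φ` of `G` minus an edge inside `H`, extending a coloring of `S` that does not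
extend to `G`, leaves lists on `H` from which `G[H]` cannot be colored. -/
theorem IsCriticalIn.exists_not_listColorable_induce [DecidableEq α] {S H : G.Subgraph}
    {L : V → Finset α} [DecidablePred (· ∈ H.verts)]
    (hcrit : IsCriticalIn (⊤ : G.Subgraph) S L)
    (hdisj : H.verts ∩ S.verts = ∅) {x y : V} (hx : x ∈ H.verts) (hy : y ∈ H.verts)
    (hxy : G.Adj x y) :
    ∃ φ : V → α, ¬ (G.induce H.verts).ListColorable
      fun v => residualList G L φ H.verts.toFinset v := by
  have hS : ∀ {v}, v ∈ S.verts → v ∉ H.verts := fun hvS hvH =>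
    (Set.eq_empty_iff_forall_notMem.1 hdisj) _ ⟨hvH, hvS⟩
  set K := (⊤ : G.Subgraph).deleteEdges {s(x, y)}
  have hKadj : ∀ {u v}, G.Adj u v → (u ∉ H.verts ∨ v ∉ H.verts) → K.Adj u v := fun huv _ => by
    simp only [K, Subgraph.deleteEdges_adj, Subgraph.top_adj, Set.mem_singleton_iff, Sym2.eq_iff]
    refine ⟨huv, ?_⟩
    rintro (⟨rfl, rfl⟩ | ⟨rfl, rfl⟩) <;> tauto
  have hSK : S ≤ K := ⟨fun v _ => trivial, fun u v huv => hKadj (S.adj_sub huv)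
    (Or.inl (hS (S.edge_vert huv)))⟩
  have hK : K ≠ ⊤ := fun hK => by
    have : K.Adj x y := hK ▸ hxy
    simp [K] at this
  obtain ⟨ψ, -, ⟨φ, hφS, hφL, hφ⟩, hnot⟩ := hcrit K hSK le_top hK
  refine ⟨φ, ?_⟩
  rintro ⟨σ, hσℓ, hσ⟩
  apply hnot
  simp only [residualList, mem_sdiff, mem_image, mem_neighborFinset, Set.mem_toFinset,
    not_exists, not_and] at hσℓ
  let τ : V → α := fun v => if hv : v ∈ H.verts then σ ⟨v, hv⟩ else φ v
  have hout : ∀ {u v}, G.Adj u v → u ∈ H.verts → v ∉ H.verts → τ u ≠ τ v :=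
    fun {u v} huv hu hv => by simpa [τ, hu, hv] using fun h => (hσℓ ⟨_, hu⟩).2 v ⟨huv, hv⟩ h.symm
  refine ⟨τ, fun v hv => by simp [τ, hS hv, hφS v hv], fun v _ hvS => ?_, fun u v huv => ?_⟩
  · by_cases hv : v ∈ H.verts
    · simpa [τ, hv] using (hσℓ ⟨v, hv⟩).1
    · simpa [τ, hv] using hφL v trivial hvS
  · by_cases hu : u ∈ H.verts <;> by_cases hv : v ∈ H.verts
    · simpa [τ, hu, hv] using hσ (show (G.induce H.verts).Adj ⟨u, hu⟩ ⟨v, hv⟩ from huv)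
    · exact hout huv hu hv
    · exact (hout huv.symm hv hu).symm
    · simpa [τ, hu, hv] using hφ (hKadj huv (Or.inl hu))

end Critical

end SimpleGraph

/-- Let `G` be a finite simple triangle-free graph, `S` a subgraph of `G`, and `L` an
assignment of lists to the vertices of `V(G) \ V(S)`.  Let `H` be a 2-connected subgraph of
`G` with `V(H) ∩ V(S) = ∅` and `|L(v)| ≥ deg_G(v)` for each `v ∈ V(H)`.  If `G` is
`S`-critical with respect to `L`, then `H` is an induced odd cycle in `G`. -/
theorem twoConnected_subgraph_of_critical {V α : Type*} [Fintype V]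
    (G : SimpleGraph V) [DecidableRel G.Adj]
    (htf : G.CliqueFree 3)
    (S : G.Subgraph) (L : V → Finset α)
    (H : G.Subgraph)
    (hdisj : H.verts ∩ S.verts = ∅)
    (h2conn : Subgraph.TwoConnected H)
    (hdeg : ∀ v ∈ H.verts, G.degree v ≤ (L v).card)
    (hcrit : IsCriticalIn (⊤ : G.Subgraph) S L) :
    Subgraph.IsInducedOddCycle H := by
  classical
  obtain ⟨hcard, hdel⟩ := h2conn
  have hncard : H.verts.ncard = Fintype.card H.verts := by
    rw [Set.ncard_eq_toFinset_card', Set.toFinset_card]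
  rw [hncard] at hcard
  have hH : H.coe.NoCutVertex := Subgraph.noCutVertex_coe hdel
  have hle : H.coe ≤ G.induce H.verts := fun _ _ h => h.adj_sub
  obtain ⟨x⟩ : Nonempty H.verts := Fintype.card_pos_iff.1 (by omega)
  obtain ⟨u, hux, -⟩ := NoCutVertex.exists_ne_ne hcard x x
  obtain ⟨y, hxy, -⟩ := hH.exists_adj_ne hcard hux.symm
  obtain ⟨φ, hφ⟩ := hcrit.exists_not_listColorable_induce hdisj x.2 y.2 (hle hxy)
  obtain ⟨hreg, hodd⟩ := (hH.mono hle).degree_eq_two_and_odd_card_of_not_listColorable hcard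
    (htf.comap ⟨Copy.induce G H.verts⟩) (fun v => (degree_induce_eq_card_inter _ v).trans_le
      (card_inter_le_card_residualList _ _ (hdeg v v.2))) hφ
  have hHG : H.coe = G.induce H.verts :=
    eq_of_le_of_degree_le hle fun v => (hreg v).trans_le (hH.two_le_degree hcard v)
  refine ⟨fun v hv w hw hvw => ?_, hH.connected hcard, fun v hv => ?_, hncard ▸ hodd⟩
  · exact (hHG ▸ hvw : H.coe.Adj ⟨v, hv⟩ ⟨w, hw⟩)
  · rw [Set.ncard_eq_toFinset_card', Subgraph.finset_card_neighborSet_eq_degree,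
      ← Subgraph.coe_degree H ⟨v, hv⟩]
    convert hreg ⟨v, hv⟩
end

section
/- Let H be a finite simple graph, S a subgraph of H, and L an assignment of lists of colors to the vertices of V(H) \ V(S). Then there exists a subgraph G of H with S ⊆ G such that G is S-critical with respect to the restriction of L, and such that every proper coloring of S extends to an L-coloring of H if and only if it extends to an L-coloring of G. -/
open SimpleGraph

/-!
Call `K ⊇ S` good if every proper coloring of `S` that extends to `K` already extends to `H`.
`H` is good and there are finitely many subgraphs, so take a minimal good `K`. A proper subgraph
`K' ⊇ S` of it is not good, which yields a coloring extending to `K'` but not to `H`, hence not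
to `K`: this is `S`-criticality. Extending to `H` always implies extending to `K ≤ H`.
-/

section

variable {V α : Type*} {G : SimpleGraph V} {S K K' : G.Subgraph} {L : V → Finset α}

theorem ExtendsToColoring.mono {ψ : V → α} (hK : K ≤ K') (h : ExtendsToColoring S K' L ψ) :
    ExtendsToColoring S K L ψ := by
  obtain ⟨φ, hS, hL, hproper⟩ := h
  exact ⟨φ, hS, fun v hv hvS => hL v (hK.1 hv) hvS, fun u v huv => hproper (hK.2 huv)⟩

def ReflectsExtensions (S K : G.Subgraph) (L : V → Finset α) : Prop :=
  S ≤ K ∧ ∀ ψ : V → α, ProperOn S ψ →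
    ExtendsToColoring S K L ψ → ExtendsToColoring S (⊤ : G.Subgraph) L ψ

theorem reflectsExtensions_top : ReflectsExtensions S (⊤ : G.Subgraph) L :=
  ⟨le_top, fun _ _ h => h⟩

theorem ReflectsExtensions.extendsToColoring_top_iff (hK : ReflectsExtensions S K L)
    {ψ : V → α} (hψ : ProperOn S ψ) :
    ExtendsToColoring S (⊤ : G.Subgraph) L ψ ↔ ExtendsToColoring S K L ψ :=
  ⟨ExtendsToColoring.mono le_top, hK.2 ψ hψ⟩

theorem isCriticalIn_of_minimal_reflectsExtensions (hK : Minimal (ReflectsExtensions S · L) K) :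
    IsCriticalIn K S L := by
  intro K' hSK' hK'K hne
  have hK' : ¬ ReflectsExtensions S K' L := fun h => hne (le_antisymm hK'K (hK.2 h hK'K))
  simp only [ReflectsExtensions, hSK', true_and, not_forall] at hK'
  obtain ⟨ψ, hψ, hextK', hnot⟩ := hK'
  exact ⟨ψ, hψ, hextK', fun hextK => hnot ((hK.1.extendsToColoring_top_iff hψ).2 hextK)⟩

end

/-- Every finite simple graph `H` with a subgraph `S` and a list assignment `L` on
`V(H) \ V(S)` has an `S`-skeleton: a subgraph `G ⊇ S` that is `S`-critical with respect to
(the restriction of) `L` and such that a proper coloring of `S` extends to an `L`-coloring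
of `H` if and only if it extends to an `L`-coloring of `G`. -/
theorem exists_skeleton {V α : Type*} [Fintype V]
    (H : SimpleGraph V) (S : H.Subgraph) (L : V → Finset α) :
    ∃ G : H.Subgraph, S ≤ G ∧ IsCriticalIn G S L ∧
      ∀ ψ : V → α, ProperOn S ψ →
        (ExtendsToColoring S (⊤ : H.Subgraph) L ψ ↔ ExtendsToColoring S G L ψ) := by
  obtain ⟨G, -, hG⟩ :=
    exists_minimal_le_of_wellFoundedLT (ReflectsExtensions S · L) ⊤ reflectsExtensions_top
  exact ⟨G, hG.1.1, isCriticalIn_of_minimal_reflectsExtensions hG,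
    fun _ hψ => hG.1.extendsToColoring_top_iff hψ⟩
end

section
/- Let w : ℤ≥0 → ℝ be the function defined by w(x) = 0 for x ≤ 4, w(5) = 1/7, and w(x) = x − 5 for x ≥ 6. If positive integers x, y, z, m satisfy x + y = z and x ≥ m and y ≥ m, then w(x) + w(y) ≤ w(z − m) + w(m). -/
/-- The weight function `w : ℤ≥0 → ℝ` defined by `w x = 0` for `x ≤ 4`,
`w 5 = 1/7`, and `w x = x - 5` for `x ≥ 6`. -/
noncomputable def weightFn (x : ℕ) : ℝ :=
  if x ≤ 4 then 0 else if x = 5 then 1 / 7 else (x : ℝ) - 5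

/-! `w` is discretely convex: its increments `0, 0, 0, 0, 1/7, 6/7, 1, 1, …` are non-decreasing.
For a discretely convex `f` and `c ≤ a ≤ d` with `a + b = c + d`, both `f a - f c` and
`f d - f b` are sums of `a - c` consecutive increments, starting at `c` and at `b ≥ c`
respectively, so the second dominates the first. Here `(a, b, c, d) = (x, y, m, z - m)`. -/

open Finset

theorem add_le_add_of_monotone_sub {α : Type*} [AddCommGroup α] [PartialOrder α]
    [IsOrderedAddMonoid α] {f : ℕ → α} (hf : Monotone fun n ↦ f (n + 1) - f n)
    {a b c d : ℕ} (h : a + b = c + d) (hca : c ≤ a) (had : a ≤ d) :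
    f a + f b ≤ f c + f d := by
  obtain ⟨k, rfl⟩ := Nat.exists_eq_add_of_le hca
  obtain rfl : d = b + k := by omega
  have hcb : c ≤ b := by omega
  have hincr : ∑ i ∈ range k, (f (c + (i + 1)) - f (c + i)) ≤
      ∑ i ∈ range k, (f (b + (i + 1)) - f (b + i)) :=
    sum_le_sum fun i _ ↦ hf (Nat.add_le_add_right hcb i)
  rw [sum_range_sub (fun i ↦ f (c + i)), sum_range_sub (fun i ↦ f (b + i)),
    add_zero, add_zero, sub_le_sub_iff, add_comm (f (b + k))] at hincr
  exact hincr

theorem monotone_weightFn_succ_sub : Monotone fun n ↦ weightFn (n + 1) - weightFn n := by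
  refine monotone_nat_of_le_succ fun n ↦ ?_
  simp only [weightFn]
  split_ifs <;> first | (exfalso; omega) | (rify at *; linarith)

theorem weightFn_add_le_general (x y z m : ℕ)
    (hxyz : x + y = z) (hmx : m ≤ x) (hmy : m ≤ y) :
    weightFn x + weightFn y ≤ weightFn (z - m) + weightFn m := by
  rw [add_comm (weightFn (z - m))]
  exact add_le_add_of_monotone_sub monotone_weightFn_succ_sub (by omega) hmx (by omega)

/-- If positive integers `x, y, z, m` satisfy `x + y = z`, `x ≥ m` and `y ≥ m`, then
`w x + w y ≤ w (z - m) + w m`. -/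
theorem weightFn_add_le (x y z m : ℕ) (hx : 0 < x) (hy : 0 < y) (hz : 0 < z) (hm : 0 < m)
    (hxyz : x + y = z) (hmx : m ≤ x) (hmy : m ≤ y) :
    weightFn x + weightFn y ≤ weightFn (z - m) + weightFn m :=
  weightFn_add_le_general x y z m hxyz hmx hmy
end
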